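/- arXiv:2401.17177 — 5 statements merged into one kernel-verified Lean document; each statement's English description precedes it below -/
import Mathlib

section
/- Let t₀ < t₁ be reals, let f, λ : ℝ × ℝ → ℝ be smooth with λ compactly supported, let S be a finite set of pairs (d,p) of natural numbers, let ε₀ ∈ ℝ and E ∈ ℝ. Define the cost C : (S → ℝ) → ℝ by C(α) = E + ∫_{t₀}^{t₁} ∫_ℝ λ(x,t) · ( ∂_t f(x,t) + Σ_{(d,p)∈S} α(d,p) · ∂_x^d (f^p)(x,t) ) dx dt + ε₀ · Σ_{(d,p)∈S} α(d,p)². Then for every (d,p) ∈ S and every α, the partial derivative of C with respect to the coordinate α(d,p) exists and equals (−1)^d ∫_{t₀}^{t₁} ∫_ℝ f(x,t)^p · ∂_x^d λ(x,t) dx dt + 2 ε₀ α(d,p). -/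
open MeasureTheory

open scoped ContDiff

lemma aux_smooth_iteratedDeriv (n : ℕ) (b : ℝ → ℝ) (hb : ContDiff ℝ ∞ b) :
    ContDiff ℝ ∞ (iteratedDeriv n b) := by
  induction n with
  | zero => simpa [iteratedDeriv_zero] using hb
  | succ n ih =>
    rw [iteratedDeriv_succ]
    exact (contDiff_infty_iff_deriv.mp ih).2

lemma aux_slice_eq (u : ℝ × ℝ → ℝ) (hu : ContDiff ℝ ∞ u) (n : ℕ) (x t : ℝ) :
    iteratedDeriv n (fun y => u (y, t)) x
      = iteratedFDeriv ℝ n u (x, t) (fun _ => ((1 : ℝ), (0 : ℝ))) := by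
  induction n generalizing x with
  | zero => simp [iteratedDeriv_zero]
  | succ n ih =>
    rw [iteratedDeriv_succ]
    have hd : ∀ y : ℝ, HasDerivAt
        (fun y : ℝ => iteratedFDeriv ℝ n u (y, t) fun _ => ((1 : ℝ), (0 : ℝ)))
        (iteratedFDeriv ℝ (n + 1) u (y, t) fun _ => ((1 : ℝ), (0 : ℝ))) y := by
      intro y
      have hF : HasFDerivAt (iteratedFDeriv ℝ n u)
          (fderiv ℝ (iteratedFDeriv ℝ n u) (y, t)) (y, t) :=
        (hu.differentiable_iteratedFDeriv (by exact_mod_cast lt_top_iff_ne_top.mpr (by simp)) (y, t)).hasFDerivAt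
      have hj : HasDerivAt (fun y : ℝ => (y, t)) ((1 : ℝ), (0 : ℝ)) y :=
        (hasDerivAt_id y).prodMk (hasDerivAt_const y t)
      have h2 := (ContinuousMultilinearMap.apply ℝ (fun _ : Fin n => ℝ × ℝ) ℝ
          (fun _ => ((1 : ℝ), (0 : ℝ)))).hasFDerivAt.comp_hasDerivAt y
          (hF.comp_hasDerivAt y hj)
      exact h2
    have hfun : iteratedDeriv n (fun y => u (y, t))
        = fun y => iteratedFDeriv ℝ n u (y, t) fun _ => ((1 : ℝ), (0 : ℝ)) :=
      funext fun y => ih y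
    rw [hfun]
    exact (hd x).deriv

lemma aux_slice_cont (u : ℝ × ℝ → ℝ) (hu : ContDiff ℝ ∞ u) (n : ℕ) :
    Continuous (fun z : ℝ × ℝ => iteratedDeriv n (fun y => u (y, z.2)) z.1) := by
  have h : (fun z : ℝ × ℝ => iteratedDeriv n (fun y => u (y, z.2)) z.1)
      = fun z : ℝ × ℝ => iteratedFDeriv ℝ n u z (fun _ => ((1 : ℝ), (0 : ℝ))) := by
    funext z
    exact aux_slice_eq u hu n z.1 z.2
  rw [h]
  exact (ContinuousMultilinearMap.apply ℝ (fun _ : Fin n => ℝ × ℝ) ℝ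
    (fun _ => ((1 : ℝ), (0 : ℝ)))).continuous.comp (hu.continuous_iteratedFDeriv (mod_cast le_top))

lemma aux_dt_eq (u : ℝ × ℝ → ℝ) (hu : ContDiff ℝ ∞ u) (x t : ℝ) :
    deriv (fun s => u (x, s)) t = fderiv ℝ u (x, t) ((0 : ℝ), (1 : ℝ)) := by
  have hj : HasDerivAt (fun s : ℝ => (x, s)) ((0 : ℝ), (1 : ℝ)) t :=
    (hasDerivAt_const t x).prodMk (hasDerivAt_id t)
  exact (((hu.differentiable (by simp) (x, t)).hasFDerivAt).comp_hasDerivAt t hj).deriv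

lemma aux_dt_cont (u : ℝ × ℝ → ℝ) (hu : ContDiff ℝ ∞ u) :
    Continuous (fun z : ℝ × ℝ => deriv (fun s => u (z.1, s)) z.2) := by
  have h : (fun z : ℝ × ℝ => deriv (fun s => u (z.1, s)) z.2)
      = fun z : ℝ × ℝ => fderiv ℝ u z ((0 : ℝ), (1 : ℝ)) := by
    funext z
    exact aux_dt_eq u hu z.1 z.2
  rw [h]
  exact (hu.continuous_fderiv (by simp)).clm_apply continuous_const

lemma aux_parts (n : ℕ) (b : ℝ → ℝ) (hb : ContDiff ℝ ∞ b) :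
    ∀ a : ℝ → ℝ, ContDiff ℝ ∞ a → HasCompactSupport a →
      ∫ x, a x * iteratedDeriv n b x = (-1 : ℝ) ^ n * ∫ x, b x * iteratedDeriv n a x := by
  induction n with
  | zero => intro a ha hca; simp [iteratedDeriv_zero, mul_comm]
  | succ n ih =>
    intro a ha hca
    have hb' : ContDiff ℝ ∞ (iteratedDeriv n b) := aux_smooth_iteratedDeriv n b hb
    have ha' : ContDiff ℝ ∞ (deriv a) := (contDiff_infty_iff_deriv.mp ha).2
    have h1 : Integrable (fun x => a x * deriv (iteratedDeriv n b) x) :=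
      (ha.continuous.mul (contDiff_infty_iff_deriv.mp hb').2.continuous).integrable_of_hasCompactSupport
        (hca.mul_right)
    have h2 : Integrable (fun x => deriv a x * iteratedDeriv n b x) :=
      (ha'.continuous.mul hb'.continuous).integrable_of_hasCompactSupport hca.deriv.mul_right
    have h3 : Integrable (fun x => a x * iteratedDeriv n b x) :=
      (ha.continuous.mul hb'.continuous).integrable_of_hasCompactSupport hca.mul_right
    have key := integral_mul_deriv_eq_deriv_mul_of_integrable
      (u := a) (u' := deriv a) (v := iteratedDeriv n b) (v' := deriv (iteratedDeriv n b))
      (fun x _ => (ha.differentiable (by simp) x).hasDerivAt)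
      (fun x _ => (hb'.differentiable (by simp) x).hasDerivAt) h1 h2 h3
    rw [iteratedDeriv_succ, key, ih (deriv a) ha' hca.deriv, ← iteratedDeriv_succ']
    ring

/-- Adjoint-method gradient formula for a single parameterized PDE in one spatial dimension:
the partial derivative of the cost `C` with respect to the coefficient `α(d,p)` equals
`(−1)^d ∫∫ f^p · ∂_x^d λ + 2 ε₀ α(d,p)`. -/
theorem adjoint_gradient_formula
    (t₀ t₁ : ℝ) (ht : t₀ < t₁) (f l : ℝ × ℝ → ℝ)
    (hf : ContDiff ℝ (⊤ : ℕ∞) f) (hl : ContDiff ℝ (⊤ : ℕ∞) l) (hlsupp : HasCompactSupport l)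
    (S : Finset (ℕ × ℕ)) (ε₀ E : ℝ)
    (C : ({q : ℕ × ℕ // q ∈ S} → ℝ) → ℝ)
    (hC : ∀ α : {q : ℕ × ℕ // q ∈ S} → ℝ,
      C α = E
        + (∫ t in t₀..t₁, ∫ x : ℝ,
            l (x, t) * (deriv (fun s => f (x, s)) t
              + ∑ q : {q : ℕ × ℕ // q ∈ S},
                  α q * iteratedDeriv q.1.1 (fun x => f (x, t) ^ q.1.2) x))
        + ε₀ * ∑ q : {q : ℕ × ℕ // q ∈ S}, (α q) ^ 2)
    (d p : ℕ) (hdp : (d, p) ∈ S) (α : {q : ℕ × ℕ // q ∈ S} → ℝ) :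
    HasDerivAt (fun s : ℝ => C (Function.update α ⟨(d, p), hdp⟩ s))
      ((-1 : ℝ) ^ d * (∫ t in t₀..t₁, ∫ x : ℝ,
          f (x, t) ^ p * iteratedDeriv d (fun x => l (x, t)) x)
        + 2 * ε₀ * α ⟨(d, p), hdp⟩)
      (α ⟨(d, p), hdp⟩) := by
  classical
  set q₀ : {q : ℕ × ℕ // q ∈ S} := ⟨(d, p), hdp⟩ with hq₀
  have hf' : ContDiff ℝ ∞ f := hf.of_le (by simp)
  have hl' : ContDiff ℝ ∞ l := hl.of_le (by simp)
  -- slice smoothness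
  have hfs : ∀ t : ℝ, ContDiff ℝ ∞ (fun y => f (y, t)) :=
    fun t => hf'.comp (contDiff_id.prodMk contDiff_const)
  have hls : ∀ t : ℝ, ContDiff ℝ ∞ (fun y => l (y, t)) :=
    fun t => hl'.comp (contDiff_id.prodMk contDiff_const)
  -- slice compact support for l
  have hK : IsCompact (Prod.fst '' tsupport l) := hlsupp.image continuous_fst
  have hslsupp : ∀ t : ℝ, HasCompactSupport (fun x => l (x, t)) := by
    intro t
    apply HasCompactSupport.intro hK
    intro x hx
    by_contra h
    exact hx ⟨(x, t), subset_tsupport l (Function.mem_support.mpr h), rfl⟩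
  -- the two integrand pieces
  set g : ℝ × ℝ → ℝ := fun z =>
    l z * (deriv (fun s => f (z.1, s)) z.2
      + ∑ q ∈ ({q₀}ᶜ : Finset {q : ℕ × ℕ // q ∈ S}),
          α q * iteratedDeriv q.1.1 (fun y => f (y, z.2) ^ q.1.2) z.1) with hgdef
  set h : ℝ × ℝ → ℝ := fun z =>
    l z * iteratedDeriv d (fun y => f (y, z.2) ^ p) z.1 with hhdef
  -- joint continuity
  have hDcont : ∀ n m : ℕ,
      Continuous (fun z : ℝ × ℝ => iteratedDeriv n (fun y => f (y, z.2) ^ m) z.1) :=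
    fun n m => aux_slice_cont (fun w => f w ^ m) (hf'.pow m) n
  have hgc : Continuous g := by
    rw [hgdef]
    exact hl.continuous.mul ((aux_dt_cont f hf').add
      (continuous_finset_sum _ fun q _ => continuous_const.mul (hDcont q.1.1 q.1.2)))
  have hhc : Continuous h := by
    rw [hhdef]
    exact hl.continuous.mul (hDcont d p)
  -- slice integrability
  have hgint : ∀ t : ℝ, Integrable (fun x => g (x, t)) := by
    intro t
    apply (hgc.comp (continuous_id.prodMk continuous_const)).integrable_of_hasCompactSupport
    exact (hslsupp t).mul_right
  have hhint : ∀ t : ℝ, Integrable (fun x => h (x, t)) := by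
    intro t
    apply (hhc.comp (continuous_id.prodMk continuous_const)).integrable_of_hasCompactSupport
    exact (hslsupp t).mul_right
  -- continuity of the parameter integrals
  have hpar : ∀ w : ℝ × ℝ → ℝ, Continuous w →
      (∀ z : ℝ × ℝ, z.1 ∉ Prod.fst '' tsupport l → w z = 0) →
      Continuous (fun t => ∫ x, w (x, t)) := by
    intro w hw hw0
    have hres : (fun t => ∫ x, w (x, t))
        = fun t => ∫ x in Prod.fst '' tsupport l, w (x, t) := by
      funext t
      exact (setIntegral_eq_integral_of_forall_compl_eq_zero
        (fun x hx => hw0 (x, t) hx)).symm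
    rw [hres]
    exact continuous_parametric_integral_of_continuous
      (f := fun t x => w (x, t)) (hw.comp continuous_swap) hK
  have hvanish : ∀ z : ℝ × ℝ, z.1 ∉ Prod.fst '' tsupport l → l z = 0 := by
    intro z hz
    by_contra hlz
    exact hz ⟨z, subset_tsupport l (Function.mem_support.mpr hlz), rfl⟩
  have hGc : Continuous (fun t => ∫ x, g (x, t)) := by
    refine hpar g hgc fun z hz => ?_
    rw [hgdef]
    simp [hvanish z hz]
  have hHc : Continuous (fun t => ∫ x, h (x, t)) := by
    refine hpar h hhc fun z hz => ?_
    rw [hhdef]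
    simp [hvanish z hz]
  -- main affine-quadratic form
  have key : ∀ s : ℝ, C (Function.update α q₀ s)
      = (E + (∫ t in t₀..t₁, ∫ x, g (x, t))
          + ε₀ * ∑ q ∈ ({q₀}ᶜ : Finset {q : ℕ × ℕ // q ∈ S}), (α q) ^ 2)
        + s * (∫ t in t₀..t₁, ∫ x, h (x, t)) + ε₀ * s ^ 2 := by
    intro s
    rw [hC]
    have inner : ∀ t : ℝ,
        (∫ x : ℝ, l (x, t) * (deriv (fun u => f (x, u)) t
            + ∑ q : {q : ℕ × ℕ // q ∈ S}, Function.update α q₀ s q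
                * iteratedDeriv q.1.1 (fun y => f (y, t) ^ q.1.2) x))
          = (∫ x, g (x, t)) + s * ∫ x, h (x, t) := by
      intro t
      have hpt : ∀ x : ℝ, l (x, t) * (deriv (fun u => f (x, u)) t
            + ∑ q : {q : ℕ × ℕ // q ∈ S}, Function.update α q₀ s q
                * iteratedDeriv q.1.1 (fun y => f (y, t) ^ q.1.2) x)
          = g (x, t) + s * h (x, t) := by
        intro x
        rw [Fintype.sum_eq_add_sum_compl q₀, Function.update_self,
          Finset.sum_congr rfl (fun q hq => by
            rw [Function.update_of_ne
              (Finset.notMem_singleton.mp (Finset.mem_compl.mp hq))])]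
        rw [hgdef, hhdef]
        ring
      rw [show (fun x : ℝ => l (x, t) * (deriv (fun u => f (x, u)) t
            + ∑ q : {q : ℕ × ℕ // q ∈ S}, Function.update α q₀ s q
                * iteratedDeriv q.1.1 (fun y => f (y, t) ^ q.1.2) x))
          = fun x : ℝ => g (x, t) + s * h (x, t) from funext hpt]
      rw [integral_add (hgint t) ((hhint t).const_mul s), integral_const_mul]
    rw [intervalIntegral.integral_congr (g := fun t => (∫ x, g (x, t)) + s * ∫ x, h (x, t))
        (fun t _ => inner t)]
    rw [intervalIntegral.integral_add (hGc.intervalIntegrable t₀ t₁)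
        ((hHc.intervalIntegrable t₀ t₁).const_mul s),
      intervalIntegral.integral_const_mul]
    have hsq : ∑ q : {q : ℕ × ℕ // q ∈ S}, (Function.update α q₀ s q) ^ 2
        = s ^ 2 + ∑ q ∈ ({q₀}ᶜ : Finset {q : ℕ × ℕ // q ∈ S}), (α q) ^ 2 := by
      rw [Fintype.sum_eq_add_sum_compl q₀, Function.update_self]
      congr 1
      exact Finset.sum_congr rfl fun q hq => by
        rw [Function.update_of_ne (Finset.notMem_singleton.mp (Finset.mem_compl.mp hq))]
    rw [hsq]
    ring
  -- value of the h-integral via integration by parts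
  have hHval : (∫ t in t₀..t₁, ∫ x, h (x, t))
      = (-1 : ℝ) ^ d * ∫ t in t₀..t₁, ∫ x : ℝ,
          f (x, t) ^ p * iteratedDeriv d (fun y => l (y, t)) x := by
    rw [← intervalIntegral.integral_const_mul]
    apply intervalIntegral.integral_congr
    intro t _
    have := aux_parts d (fun y => f (y, t) ^ p) ((hfs t).pow p)
      (fun y => l (y, t)) (hls t) (hslsupp t)
    calc (∫ x, h (x, t)) = ∫ x, (fun y => l (y, t)) x
          * iteratedDeriv d (fun y => f (y, t) ^ p) x := by rw [hhdef]
      _ = (-1 : ℝ) ^ d * ∫ x, (fun y => f (y, t) ^ p) x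
          * iteratedDeriv d (fun y => l (y, t)) x := this
      _ = (-1 : ℝ) ^ d * ∫ x : ℝ, f (x, t) ^ p
          * iteratedDeriv d (fun y => l (y, t)) x := rfl
  simp only [key]
  have hd1 : HasDerivAt (fun s : ℝ =>
      (E + (∫ t in t₀..t₁, ∫ x, g (x, t))
          + ε₀ * ∑ q ∈ ({q₀}ᶜ : Finset {q : ℕ × ℕ // q ∈ S}), (α q) ^ 2)
        + s * (∫ t in t₀..t₁, ∫ x, h (x, t)) + ε₀ * s ^ 2)
      (0 + 1 * (∫ t in t₀..t₁, ∫ x, h (x, t)) + ε₀ * (2 * α q₀ ^ 1)) (α q₀) :=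
    ((hasDerivAt_const _ _).add
      ((hasDerivAt_id (α q₀)).mul_const _)).add ((hasDerivAt_pow 2 (α q₀)).const_mul ε₀)
  convert hd1 using 1
  rw [hHval]
  push_cast
  ring
end

section
/- Let t₀ < t₁ be reals, let f, δf, λ : ℝ × ℝ → ℝ be smooth with λ compactly supported, and let d, p be natural numbers with p ≥ 1. Then the map ε ↦ ∫_{t₀}^{t₁} ∫_ℝ λ(x,t) · ∂_x^d ( (f + ε δf)^p )(x,t) dx dt has derivative at ε = 0 equal to (−1)^d · p · ∫_{t₀}^{t₁} ∫_ℝ δf(x,t) · f(x,t)^{p−1} · ∂_x^d λ(x,t) dx dt. -/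
open MeasureTheory

open Set Function

noncomputable def pdAux (g : ℝ × ℝ → ℝ) : ℝ × ℝ → ℝ := fun z => fderiv ℝ g z (1, 0)

noncomputable def pdIterAux : ℕ → (ℝ × ℝ → ℝ) → (ℝ × ℝ → ℝ)
  | 0, g => g
  | n + 1, g => pdIterAux n (pdAux g)

lemma pdAux_contDiff {g : ℝ × ℝ → ℝ} (hg : ContDiff ℝ (⊤ : ℕ∞) g) :
    ContDiff ℝ (⊤ : ℕ∞) (pdAux g) :=
  (hg.fderiv_right (by simp)).clm_apply contDiff_const

lemma pdIterAux_contDiff : ∀ (n : ℕ) {g : ℝ × ℝ → ℝ}, ContDiff ℝ (⊤ : ℕ∞) g →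
    ContDiff ℝ (⊤ : ℕ∞) (pdIterAux n g)
  | 0, _, hg => hg
  | n + 1, _, hg => pdIterAux_contDiff n (pdAux_contDiff hg)

lemma pdAux_tsupport {g : ℝ × ℝ → ℝ} : tsupport (pdAux g) ⊆ tsupport g := by
  apply closure_minimal _ (isClosed_tsupport g)
  intro z hz
  have h1 : fderiv ℝ g z ≠ 0 := by
    intro h
    apply hz
    simp [pdAux, h]
  exact support_fderiv_subset (𝕜 := ℝ) h1

lemma pdIterAux_tsupport : ∀ (n : ℕ) {g : ℝ × ℝ → ℝ}, tsupport (pdIterAux n g) ⊆ tsupport g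
  | 0, _ => subset_rfl
  | n + 1, g => (pdIterAux_tsupport n).trans pdAux_tsupport

lemma deriv_slice_aux {g : ℝ × ℝ → ℝ} (hg : ContDiff ℝ (⊤ : ℕ∞) g) (t x : ℝ) :
    deriv (fun x => g (x, t)) x = pdAux g (x, t) := by
  have h1 : HasDerivAt (fun x : ℝ => (x, t)) ((1 : ℝ), (0 : ℝ)) x :=
    (hasDerivAt_id x).prodMk (hasDerivAt_const x t)
  exact ((hg.differentiable (by simp) (x, t)).hasFDerivAt.comp_hasDerivAt x h1).deriv

lemma iteratedDeriv_slice_aux : ∀ (n : ℕ) (g : ℝ × ℝ → ℝ), ContDiff ℝ (⊤ : ℕ∞) g → ∀ (t x : ℝ),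
    iteratedDeriv n (fun x => g (x, t)) x = pdIterAux n g (x, t)
  | 0, g, _, t, x => rfl
  | n + 1, g, hg, t, x => by
    rw [iteratedDeriv_succ']
    have h : deriv (fun x => g (x, t)) = fun x => pdAux g (x, t) :=
      funext (deriv_slice_aux hg t)
    rw [h]
    exact iteratedDeriv_slice_aux n (pdAux g) (pdAux_contDiff hg) t x

lemma slice_contDiff_aux {g : ℝ × ℝ → ℝ} (hg : ContDiff ℝ (⊤ : ℕ∞) g) (t : ℝ) :
    ContDiff ℝ (⊤ : ℕ∞) (fun x : ℝ => g (x, t)) :=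
  hg.comp (contDiff_id.prodMk contDiff_const)

lemma slice_hasCompactSupport_aux {g : ℝ × ℝ → ℝ} (hg : HasCompactSupport g) (t : ℝ) :
    HasCompactSupport (fun x : ℝ => g (x, t)) := by
  apply HasCompactSupport.intro (IsCompact.image hg continuous_fst)
  intro x hx
  by_contra h
  exact hx ⟨(x, t), subset_tsupport _ h, rfl⟩

lemma contDiff_iteratedDeriv_aux {u : ℝ → ℝ} (hu : ContDiff ℝ (⊤ : ℕ∞) u) (n : ℕ) :
    ContDiff ℝ (⊤ : ℕ∞) (iteratedDeriv n u) := by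
  rw [iteratedDeriv_eq_iterate]
  exact hu.iterate_deriv n

lemma hcs_iteratedDeriv_aux {u : ℝ → ℝ} (hu : HasCompactSupport u) (n : ℕ) :
    HasCompactSupport (iteratedDeriv n u) := by
  induction n with
  | zero => simpa using hu
  | succ n ih => rw [iteratedDeriv_succ]; exact ih.deriv

lemma ibp_iter_aux : ∀ (n : ℕ) (u v : ℝ → ℝ), ContDiff ℝ (⊤ : ℕ∞) u → ContDiff ℝ (⊤ : ℕ∞) v →
    HasCompactSupport u →
    ∫ x : ℝ, u x * iteratedDeriv n v x = (-1 : ℝ) ^ n * ∫ x : ℝ, v x * iteratedDeriv n u x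
  | 0, u, v, _, _, _ => by simp [mul_comm]
  | n + 1, u, v, hu, hv, hcu => by
    have hv' : ContDiff ℝ (⊤ : ℕ∞) (deriv v) := (contDiff_infty_iff_deriv.mp hv).2
    rw [iteratedDeriv_succ', ibp_iter_aux n u (deriv v) hu hv' hcu]
    have hWc : ContDiff ℝ (⊤ : ℕ∞) (iteratedDeriv n u) := contDiff_iteratedDeriv_aux hu n
    have hWs : HasCompactSupport (iteratedDeriv n u) := hcs_iteratedDeriv_aux hcu n
    have key : ∫ x : ℝ, iteratedDeriv n u x * deriv v x
        = - ∫ x : ℝ, deriv (iteratedDeriv n u) x * v x := by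
      apply integral_mul_deriv_eq_deriv_mul_of_integrable
        (fun x _ => (hWc.differentiable (by simp) x).hasDerivAt)
        (fun x _ => (hv.differentiable (by simp) x).hasDerivAt)
      · exact (hWc.continuous.mul hv'.continuous).integrable_of_hasCompactSupport
          hWs.mul_right
      · exact (((contDiff_infty_iff_deriv.mp hWc).2).continuous.mul hv.continuous).integrable_of_hasCompactSupport
          hWs.deriv.mul_right
      · exact (hWc.continuous.mul hv.continuous).integrable_of_hasCompactSupport
          hWs.mul_right
    have e1 : (fun x : ℝ => deriv v x * iteratedDeriv n u x)
        = fun x : ℝ => iteratedDeriv n u x * deriv v x := funext fun x => mul_comm _ _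
    have e2 : (fun x : ℝ => deriv (iteratedDeriv n u) x * v x)
        = fun x : ℝ => v x * deriv (iteratedDeriv n u) x := funext fun x => mul_comm _ _
    rw [iteratedDeriv_succ (n := n) (f := u), e1, key, e2]
    ring

/-- Gateaux derivative of one nonlinear candidate term of the forward model:
`d/dε |_{ε=0} ∫∫ λ · ∂_x^d((f + ε δf)^p) = (−1)^d p ∫∫ δf · f^{p−1} · ∂_x^d λ`. -/
theorem gateaux_derivative_candidate_term
    (t₀ t₁ : ℝ) (ht : t₀ < t₁) (f δf l : ℝ × ℝ → ℝ)
    (hf : ContDiff ℝ (⊤ : ℕ∞) f) (hδf : ContDiff ℝ (⊤ : ℕ∞) δf) (hl : ContDiff ℝ (⊤ : ℕ∞) l)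
    (hlsupp : HasCompactSupport l) (d p : ℕ) (hp : 1 ≤ p) :
    HasDerivAt (fun ε : ℝ => ∫ t in t₀..t₁, ∫ x : ℝ,
        l (x, t) * iteratedDeriv d (fun x => (f (x, t) + ε * δf (x, t)) ^ p) x)
      ((-1 : ℝ) ^ d * p * ∫ t in t₀..t₁, ∫ x : ℝ,
        δf (x, t) * f (x, t) ^ (p - 1) * iteratedDeriv d (fun x => l (x, t)) x)
      0 := by
  have hf : ContDiff ℝ (⊤ : ℕ∞) f := hf.of_le (by simp)
  have hδf : ContDiff ℝ (⊤ : ℕ∞) δf := hδf.of_le (by simp)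
  have hl : ContDiff ℝ (⊤ : ℕ∞) l := hl.of_le (by simp)
  set D : ℝ × ℝ → ℝ := pdIterAux d l with hD
  have hDc : ContDiff ℝ (⊤ : ℕ∞) D := pdIterAux_contDiff d hl
  have hDsupp : ∀ z, z ∉ tsupport l → D z = 0 := fun z hz =>
    image_eq_zero_of_notMem_tsupport fun h => hz (pdIterAux_tsupport d h)
  have hDcs : HasCompactSupport D :=
    IsCompact.of_isClosed_subset hlsupp (isClosed_tsupport D) (pdIterAux_tsupport d)
  set ν : Measure (ℝ × ℝ) := (volume.restrict (Set.Ioc t₀ t₁)).prod volume with hν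
  have hν_eq : ν = (volume : Measure (ℝ × ℝ)).restrict (Set.Ioc t₀ t₁ ×ˢ (Set.univ : Set ℝ)) := by
    rw [hν, Measure.volume_eq_prod, ← Measure.prod_restrict, Measure.restrict_univ]
  have hIntAux : ∀ φ : ℝ × ℝ → ℝ, Continuous φ → HasCompactSupport φ → Integrable φ ν := by
    intro φ hc hs
    rw [hν_eq]
    exact (hc.integrable_of_hasCompactSupport hs).restrict
  have hswap : Continuous fun z : ℝ × ℝ => ((z.2, z.1) : ℝ × ℝ) :=
    continuous_snd.prodMk continuous_fst
  have hDsc : Continuous fun z : ℝ × ℝ => D (z.2, z.1) := hDc.continuous.comp hswap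
  have hDscs : HasCompactSupport fun z : ℝ × ℝ => D (z.2, z.1) :=
    hDcs.comp_homeomorph (Homeomorph.prodComm ℝ ℝ)
  set G : ℝ → (ℝ × ℝ) → ℝ :=
    fun ε z => (f (z.2, z.1) + ε * δf (z.2, z.1)) ^ p * D (z.2, z.1) with hG
  set G' : ℝ → (ℝ × ℝ) → ℝ :=
    fun ε z => ((p : ℝ) * (f (z.2, z.1) + ε * δf (z.2, z.1)) ^ (p - 1) * δf (z.2, z.1))
      * D (z.2, z.1) with hG'
  have hGc : ∀ ε : ℝ, Continuous (G ε) := fun ε =>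
    (((hf.continuous.comp hswap).add
      (continuous_const.mul (hδf.continuous.comp hswap))).pow p).mul hDsc
  have hG'c : ∀ ε : ℝ, Continuous (G' ε) := fun ε =>
    ((continuous_const.mul (((hf.continuous.comp hswap).add
      (continuous_const.mul (hδf.continuous.comp hswap))).pow (p - 1))).mul
      (hδf.continuous.comp hswap)).mul hDsc
  have hGint : ∀ ε : ℝ, Integrable (G ε) ν := fun ε =>
    hIntAux _ (hGc ε) (HasCompactSupport.mul_left hDscs)
  -- Fubini helper
  have fub : ∀ h : ℝ → ℝ → ℝ, Integrable (uncurry h) ν →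
      (∫ t in t₀..t₁, ∫ x : ℝ, h t x) = ∫ z, h z.1 z.2 ∂ν := by
    intro h hint
    rw [intervalIntegral.integral_of_le ht.le]
    exact integral_integral hint
  -- Step 1: rewrite the function using integration by parts
  have step1 : ∀ ε : ℝ,
      (∫ t in t₀..t₁, ∫ x : ℝ,
        l (x, t) * iteratedDeriv d (fun x => (f (x, t) + ε * δf (x, t)) ^ p) x)
      = (-1 : ℝ) ^ d * ∫ z, G ε z ∂ν := by
    intro ε
    have inner : ∀ t : ℝ,
        (∫ x : ℝ, l (x, t) * iteratedDeriv d (fun x => (f (x, t) + ε * δf (x, t)) ^ p) x)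
        = (-1 : ℝ) ^ d * ∫ x : ℝ, (f (x, t) + ε * δf (x, t)) ^ p * D (x, t) := by
      intro t
      have hu : ContDiff ℝ (⊤ : ℕ∞) (fun x : ℝ => l (x, t)) := slice_contDiff_aux hl t
      have hv : ContDiff ℝ (⊤ : ℕ∞) (fun x : ℝ => (f (x, t) + ε * δf (x, t)) ^ p) :=
        ((slice_contDiff_aux hf t).add (contDiff_const.mul (slice_contDiff_aux hδf t))).pow p
      rw [ibp_iter_aux d _ _ hu hv (slice_hasCompactSupport_aux hlsupp t)]
      have e : (fun x : ℝ => (f (x, t) + ε * δf (x, t)) ^ p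
            * iteratedDeriv d (fun x => l (x, t)) x)
          = fun x : ℝ => (f (x, t) + ε * δf (x, t)) ^ p * D (x, t) := by
        funext x
        rw [iteratedDeriv_slice_aux d l hl t x, hD]
      rw [e]
    calc (∫ t in t₀..t₁, ∫ x : ℝ,
          l (x, t) * iteratedDeriv d (fun x => (f (x, t) + ε * δf (x, t)) ^ p) x)
        = ∫ t in t₀..t₁, (-1 : ℝ) ^ d * ∫ x : ℝ, (f (x, t) + ε * δf (x, t)) ^ p * D (x, t) :=
          intervalIntegral.integral_congr fun t _ => inner t
      _ = (-1 : ℝ) ^ d * ∫ t in t₀..t₁, ∫ x : ℝ, (f (x, t) + ε * δf (x, t)) ^ p * D (x, t) :=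
          intervalIntegral.integral_const_mul _ _
      _ = (-1 : ℝ) ^ d * ∫ z, G ε z ∂ν := by
          exact congrArg _
            (fub (fun t x => (f (x, t) + ε * δf (x, t)) ^ p * D (x, t)) (hGint ε))
  -- Step 2: dominated differentiation under the integral
  set S : Set (ℝ × ℝ) := (fun z : ℝ × ℝ => ((z.2, z.1) : ℝ × ℝ)) ⁻¹' tsupport l with hS
  have hScomp : IsCompact S := (Homeomorph.prodComm ℝ ℝ).isCompact_preimage.2 hlsupp
  have hSclosed : IsClosed S := (isClosed_tsupport l).preimage hswap
  have hG'big : Continuous fun q : ℝ × (ℝ × ℝ) => G' q.1 q.2 := by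
    have hsw2 : Continuous fun q : ℝ × (ℝ × ℝ) => ((q.2.2, q.2.1) : ℝ × ℝ) :=
      (continuous_snd.snd).prodMk (continuous_snd.fst)
    exact ((continuous_const.mul (((hf.continuous.comp hsw2).add
      (continuous_fst.mul (hδf.continuous.comp hsw2))).pow (p - 1))).mul
      (hδf.continuous.comp hsw2)).mul (hDc.continuous.comp hsw2)
  obtain ⟨C, hC⟩ := ((isCompact_Icc (a := (-1:ℝ)) (b := 1)).prod hScomp).exists_bound_of_continuousOn
    (f := fun q : ℝ × (ℝ × ℝ) => G' q.1 q.2) (hG'big.continuousOn)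
  have h_bound : ∀ z : ℝ × ℝ, ∀ ε ∈ Metric.ball (0 : ℝ) 1,
      ‖G' ε z‖ ≤ S.indicator (fun _ => C) z := by
    intro z ε hε
    by_cases hz : z ∈ S
    · rw [Set.indicator_of_mem hz]
      refine hC (ε, z) ⟨?_, hz⟩
      have : |ε| < 1 := by simpa [Real.norm_eq_abs] using Metric.mem_ball.mp hε
      exact Set.mem_Icc.mpr ⟨by linarith [neg_abs_le ε], by linarith [le_abs_self ε]⟩
    · rw [Set.indicator_of_notMem hz]
      have h0 : D (z.2, z.1) = 0 := hDsupp _ hz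
      simp [hG', h0]
  have hbi : Integrable (S.indicator fun _ => C) ν := by
    rw [integrable_indicator_iff hSclosed.measurableSet]
    refine integrableOn_const (ne_of_lt ?_)
    have h1 : ν S ≤ volume S := by
      rw [hν_eq]
      exact Measure.restrict_apply_le _ _
    exact lt_of_le_of_lt h1 hScomp.measure_lt_top
  have h_diff : ∀ z : ℝ × ℝ, ∀ ε ∈ Metric.ball (0 : ℝ) 1,
      HasDerivAt (fun ε => G ε z) (G' ε z) ε := by
    intro z ε _
    have h0 : HasDerivAt (fun ε : ℝ => f (z.2, z.1) + ε * δf (z.2, z.1)) (δf (z.2, z.1)) ε := by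
      simpa using ((hasDerivAt_id ε).mul_const (δf (z.2, z.1))).const_add (f (z.2, z.1))
    simpa [hG, hG'] using (h0.pow p).mul_const (D (z.2, z.1))
  have main := hasDerivAt_integral_of_dominated_loc_of_deriv_le (μ := ν)
      (F := G) (F' := G') (x₀ := (0 : ℝ)) (bound := S.indicator fun _ => C)
      (Metric.ball_mem_nhds 0 one_pos)
      (Filter.Eventually.of_forall fun ε => (hGc ε).aestronglyMeasurable)
      (hGint 0)
      ((hG'c 0).aestronglyMeasurable)
      (Filter.Eventually.of_forall h_bound)
      hbi
      (Filter.Eventually.of_forall h_diff)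
  have final := main.2.const_mul ((-1 : ℝ) ^ d)
  have hEq : (fun ε : ℝ => ∫ t in t₀..t₁, ∫ x : ℝ,
        l (x, t) * iteratedDeriv d (fun x => (f (x, t) + ε * δf (x, t)) ^ p) x)
      = fun ε : ℝ => (-1 : ℝ) ^ d * ∫ z, G ε z ∂ν := funext step1
  rw [hEq]
  refine final.congr_deriv ?_
  have hfub2 : (∫ t in t₀..t₁, ∫ x : ℝ,
        ((p : ℝ) * (f (x, t) + 0 * δf (x, t)) ^ (p - 1) * δf (x, t)) * D (x, t))
      = ∫ z, G' 0 z ∂ν :=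
    fub (fun t x => ((p : ℝ) * (f (x, t) + 0 * δf (x, t)) ^ (p - 1) * δf (x, t)) * D (x, t))
      main.1
  rw [← hfub2, mul_assoc]
  congr 1
  rw [← intervalIntegral.integral_const_mul]
  refine intervalIntegral.integral_congr fun t _ => ?_
  rw [← integral_const_mul]
  congr 1
  funext x
  rw [iteratedDeriv_slice_aux d l hl t x, ← hD]
  ring
end

section
/- In the setting of the total-variation formula — t₀ < t₁ reals; f, λ : ℝ × ℝ → ℝ smooth with λ compactly supported; f* : ℝ → ℝ continuous with x ↦ f*(x) − f(x,t₁) square-integrable; S a finite set of pairs (d,p) of natural numbers with p ≥ 1 for all (d,p) ∈ S; α : S → ℝ — suppose λ satisfies the adjoint equation ∂_t λ(x,t) = Σ_{(d,p)∈S} (−1)^d α(d,p) · p · f(x,t)^{p−1} · ∂_x^d λ(x,t) for all x ∈ ℝ and t ∈ [t₀,t₁], together with the final condition λ(x,t₁) = 2( f*(x) − f(x,t₁) ) for all x ∈ ℝ. Then for every smooth compactly supported δf : ℝ × ℝ → ℝ with δf(x,t₀) = 0 for all x, the map ε ↦ ∫_ℝ ( f*(x) − f(x,t₁) − ε δf(x,t₁)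 )² dx + ∫_{t₀}^{t₁} ∫_ℝ λ(x,t) · ( ∂_t(f+εδf)(x,t) + Σ_{(d,p)∈S} α(d,p) · ∂_x^d((f+εδf)^p)(x,t) ) dx dt has derivative zero at ε = 0. -/
open MeasureTheory

open MeasureTheory

noncomputable section AuxStationarity

private lemma slice_x_smooth {u : ℝ × ℝ → ℝ} (hu : ContDiff ℝ (⊤:ℕ∞) u) (t : ℝ) :
    ContDiff ℝ (⊤:ℕ∞) (fun x => u (x, t)) :=
  hu.comp (contDiff_id.prodMk contDiff_const)

private lemma slice_t_smooth {u : ℝ × ℝ → ℝ} (hu : ContDiff ℝ (⊤:ℕ∞) u) (x : ℝ) :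
    ContDiff ℝ (⊤:ℕ∞) (fun t => u (x, t)) :=
  hu.comp (contDiff_const.prodMk contDiff_id)

private lemma hasDerivAt_slice_x {u : ℝ × ℝ → ℝ} (hu : ContDiff ℝ (⊤:ℕ∞) u) (x t : ℝ) :
    HasDerivAt (fun y => u (y, t)) (fderiv ℝ u (x, t) (1, 0)) x := by
  have h1 : HasDerivAt (fun y : ℝ => (y, t)) ((1:ℝ), (0:ℝ)) x :=
    (hasDerivAt_id x).prodMk (hasDerivAt_const x t)
  exact ((hu.differentiable (by simp)) (x, t)).hasFDerivAt.comp_hasDerivAt x h1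

private lemma hasDerivAt_slice_t {u : ℝ × ℝ → ℝ} (hu : ContDiff ℝ (⊤:ℕ∞) u) (x t : ℝ) :
    HasDerivAt (fun s => u (x, s)) (fderiv ℝ u (x, t) (0, 1)) t := by
  have h1 : HasDerivAt (fun s : ℝ => (x, s)) ((0:ℝ), (1:ℝ)) t :=
    (hasDerivAt_const t x).prodMk (hasDerivAt_id t)
  exact ((hu.differentiable (by simp)) (x, t)).hasFDerivAt.comp_hasDerivAt t h1

private lemma fderiv_apply_smooth {u : ℝ × ℝ → ℝ} (hu : ContDiff ℝ (⊤:ℕ∞) u) (v : ℝ × ℝ) :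
    ContDiff ℝ (⊤:ℕ∞) (fun p : ℝ × ℝ => fderiv ℝ u p v) := by
  have h : ContDiff ℝ (⊤:ℕ∞) (fderiv ℝ u) := hu.fderiv_right (le_of_eq (by simp))
  exact h.clm_apply contDiff_const

private lemma pd_joint_smooth (n : ℕ) :
    ∀ u : ℝ × ℝ → ℝ, ContDiff ℝ (⊤:ℕ∞) u →
      ContDiff ℝ (⊤:ℕ∞) (fun p : ℝ × ℝ => iteratedDeriv n (fun y => u (y, p.2)) p.1) := by
  induction n with
  | zero =>
    intro u hu
    simpa [iteratedDeriv_zero] using hu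
  | succ n IH =>
    intro u hu
    have hu' : ContDiff ℝ (⊤:ℕ∞) (fun q : ℝ × ℝ => fderiv ℝ u q (1, 0)) :=
      fderiv_apply_smooth hu _
    have key : (fun p : ℝ × ℝ => iteratedDeriv (n+1) (fun y => u (y, p.2)) p.1)
        = fun p : ℝ × ℝ =>
            iteratedDeriv n (fun y => (fun q : ℝ × ℝ => fderiv ℝ u q (1, 0)) (y, p.2)) p.1 := by
      funext p
      rw [iteratedDeriv_succ']
      congr 1
      funext y
      exact (hasDerivAt_slice_x hu y p.2).deriv
    rw [key]
    exact IH _ hu'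

private lemma hcs_slice {u : ℝ × ℝ → ℝ} (hu : HasCompactSupport u) (t : ℝ) :
    HasCompactSupport (fun x => u (x, t)) := by
  have himg : IsCompact (Prod.fst '' tsupport u) := hu.image continuous_fst
  apply IsCompact.of_isClosed_subset himg (isClosed_tsupport _)
  apply closure_minimal _ himg.isClosed
  intro x hx
  exact ⟨(x, t), subset_tsupport _ hx, rfl⟩

private lemma hcs_iteratedDeriv {g : ℝ → ℝ} (hg : HasCompactSupport g) (d : ℕ) :
    HasCompactSupport (iteratedDeriv d g) := by
  induction d with
  | zero => simpa [iteratedDeriv_zero]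
  | succ n IH => rw [iteratedDeriv_succ]; exact IH.deriv

private lemma iteratedDeriv_add' {f g : ℝ → ℝ} (hf : ContDiff ℝ (⊤:ℕ∞) f)
    (hg : ContDiff ℝ (⊤:ℕ∞) g) (n : ℕ) (x : ℝ) :
    iteratedDeriv n (fun y => f y + g y) x = iteratedDeriv n f x + iteratedDeriv n g x := by
  simp only [← iteratedDerivWithin_univ]
  exact iteratedDerivWithin_add (Set.mem_univ x) uniqueDiffOn_univ
    ((hf.of_le (mod_cast le_top)).contDiffWithinAt) ((hg.of_le (mod_cast le_top)).contDiffWithinAt)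

private lemma iteratedDeriv_const_mul' (c : ℝ) {f : ℝ → ℝ} (hf : ContDiff ℝ (⊤:ℕ∞) f)
    (n : ℕ) (x : ℝ) :
    iteratedDeriv n (fun y => c * f y) x = c * iteratedDeriv n f x := by
  simp only [← iteratedDerivWithin_univ]
  exact iteratedDerivWithin_const_mul (Set.mem_univ x) uniqueDiffOn_univ c
    ((hf.of_le (mod_cast le_top)).contDiffWithinAt)

private lemma iteratedDeriv_zero_fun (n : ℕ) (x : ℝ) :
    iteratedDeriv n (fun _ : ℝ => (0:ℝ)) x = 0 := by
  have := iteratedDeriv_const_mul' 0 contDiff_const (f := fun _ : ℝ => (0:ℝ)) n x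
  simpa using this

private lemma iteratedDeriv_finset_sum {ι : Type*} (s : Finset ι) {g : ι → ℝ → ℝ}
    (hg : ∀ i ∈ s, ContDiff ℝ (⊤:ℕ∞) (g i)) (n : ℕ) (x : ℝ) :
    iteratedDeriv n (fun y => ∑ i ∈ s, g i y) x = ∑ i ∈ s, iteratedDeriv n (g i) x := by
  classical
  induction s using Finset.induction_on with
  | empty => simpa using iteratedDeriv_zero_fun n x
  | insert a s hnot IH =>
    have h1 : ContDiff ℝ (⊤:ℕ∞) (g a) := hg a (Finset.mem_insert_self a s)
    have h2 : ∀ i ∈ s, ContDiff ℝ (⊤:ℕ∞) (g i) := fun i hi => hg i (Finset.mem_insert_of_mem hi)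
    have h3 : ContDiff ℝ (⊤:ℕ∞) (fun y => ∑ i ∈ s, g i y) := by
      apply ContDiff.sum (fun i hi => h2 i hi)
    have : (fun y => ∑ i ∈ insert a s, g i y) = fun y => g a y + ∑ i ∈ s, g i y := by
      funext y; rw [Finset.sum_insert hnot]
    rw [this, iteratedDeriv_add' h1 h3, IH h2, Finset.sum_insert hnot]


private lemma cont_iteratedDeriv {g : ℝ → ℝ} (hg : ContDiff ℝ (⊤:ℕ∞) g) (d : ℕ) :
    Continuous (iteratedDeriv d g) := by
  have : ContDiff ℝ (⊤:ℕ∞) (iteratedDeriv d g) := by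
    rw [iteratedDeriv_eq_iterate]
    exact hg.iterate_deriv d
  exact this.continuous

private lemma integrable_mul_cs {u v : ℝ → ℝ} (hu : Continuous u) (hv : Continuous v)
    (hvc : HasCompactSupport v) : Integrable (fun x => u x * v x) := by
  apply Continuous.integrable_of_hasCompactSupport (hu.mul hv)
  apply HasCompactSupport.mono' hvc
  intro x hx
  have : v x ≠ 0 := by
    intro h0; simp [h0] at hx
  exact subset_tsupport _ this

private lemma integral_parts (d : ℕ) : ∀ g h : ℝ → ℝ, ContDiff ℝ (⊤:ℕ∞) g → ContDiff ℝ (⊤:ℕ∞) h →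
    HasCompactSupport g → HasCompactSupport h →
    ∫ x, g x * iteratedDeriv d h x = (-1:ℝ)^d * ∫ x, iteratedDeriv d g x * h x := by
  induction d with
  | zero => intro g h _ _ _ _; simp [iteratedDeriv_zero]
  | succ n IH =>
    intro g h hgs hhs hgc hhc
    have hh' : ContDiff ℝ (⊤:ℕ∞) (deriv h) := (contDiff_infty_iff_deriv.mp hhs).2
    have hh'c : HasCompactSupport (deriv h) := hhc.deriv
    have step1 : ∫ x, g x * iteratedDeriv (n+1) h x
        = ∫ x, g x * iteratedDeriv n (deriv h) x := by
      congr 1; funext x; rw [iteratedDeriv_succ']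
    have step2 := IH g (deriv h) hgs hh' hgc hh'c
    -- one-step integration by parts: ∫ (iD n g) * deriv h = - ∫ deriv (iD n g) * h
    have hgn : ContDiff ℝ (⊤:ℕ∞) (iteratedDeriv n g) := by
      rw [iteratedDeriv_eq_iterate]; exact hgs.iterate_deriv n
    have hgnc : HasCompactSupport (iteratedDeriv n g) := hcs_iteratedDeriv hgc n
    have hstep : ∫ x, iteratedDeriv n g x * deriv h x = - ∫ x, deriv (iteratedDeriv n g) x * h x := by
      apply integral_mul_deriv_eq_deriv_mul_of_integrable
      · intro x _
        exact ((contDiff_infty_iff_deriv.mp hgn).1 x).hasDerivAt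
      · intro x _
        exact ((contDiff_infty_iff_deriv.mp hhs).1 x).hasDerivAt
      · exact integrable_mul_cs (cont_iteratedDeriv hgs n) ((contDiff_infty_iff_deriv.mp hhs).2.continuous) hhc.deriv
      · exact integrable_mul_cs ((contDiff_infty_iff_deriv.mp hgn).2.continuous) hhs.continuous hhc
      · exact integrable_mul_cs (cont_iteratedDeriv hgs n) hhs.continuous hhc
    have step3 : ∫ x, deriv (iteratedDeriv n g) x * h x = ∫ x, iteratedDeriv (n+1) g x * h x := by
      congr 1; funext x; rw [iteratedDeriv_succ]
    rw [step1, step2, hstep, step3]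
    ring


private lemma cont_param_integral {W : ℝ × ℝ → ℝ} (hW : Continuous W)
    (hWc : HasCompactSupport W) : Continuous (fun t => ∫ x, W (x, t)) := by
  obtain ⟨C, hC⟩ := hW.bounded_above_of_compact_support hWc
  set K : Set ℝ := Prod.fst '' tsupport W with hK
  have hKc : IsCompact K := hWc.image continuous_fst
  apply continuous_of_dominated (bound := K.indicator fun _ => C)
  · intro t
    exact (hW.comp (continuous_id.prodMk continuous_const)).aestronglyMeasurable
  · intro t
    filter_upwards with x
    by_cases hx : x ∈ K
    · rw [Set.indicator_of_mem hx]; exact hC _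
    · rw [Set.indicator_of_notMem hx]
      have : W (x, t) = 0 := by
        by_contra h0
        exact hx ⟨(x, t), subset_tsupport _ h0, rfl⟩
      simp [this]
  · rw [integrable_indicator_iff hKc.isClosed.measurableSet]
    exact integrableOn_const hKc.measure_lt_top.ne
  · filter_upwards with x
    exact hW.comp (continuous_const.prodMk continuous_id)

private lemma integrable_L2_mul_cs {A B : ℝ → ℝ} (hA : AEStronglyMeasurable A volume)
    (hA2 : MemLp A 2 volume) (hB : Continuous B) (hBc : HasCompactSupport B) :
    Integrable (fun x => A x * B x) := by
  set K := tsupport B with hK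
  have hKc : IsCompact K := hBc
  haveI : IsFiniteMeasure (volume.restrict K) :=
    ⟨by rw [Measure.restrict_apply_univ]; exact hKc.measure_lt_top⟩
  have hA1 : Integrable A (volume.restrict K) := (hA2.restrict K).integrable one_le_two
  obtain ⟨C, hC⟩ := hB.bounded_above_of_compact_support hBc
  have h1 : Integrable (fun x => B x * A x) (volume.restrict K) :=
    hA1.bdd_mul hB.aestronglyMeasurable (Filter.Eventually.of_forall hC)
  have h2 : IntegrableOn (fun x => A x * B x) K volume := by
    apply h1.congr
    filter_upwards with x using mul_comm (B x) (A x)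
  have hsub : Function.support (fun x => A x * B x) ⊆ K := by
    intro x hx
    apply subset_tsupport
    intro h0
    simp only [Function.mem_support] at hx
    apply hx; rw [h0, mul_zero]
  exact (integrableOn_iff_integrable_of_support_subset hsub).mp h2

private lemma swap_interval_integral {Φ : ℝ × ℝ → ℝ} (hΦ : Continuous Φ)
    (hΦc : HasCompactSupport Φ) (t₀ t₁ : ℝ) (h : t₀ ≤ t₁) :
    ∫ t in t₀..t₁, ∫ x, Φ (x, t) = ∫ x, ∫ t in t₀..t₁, Φ (x, t) := by
  have hint : Integrable Φ ((volume : Measure ℝ).prod (volume : Measure ℝ)) := by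
    have h0 : Integrable Φ volume := hΦ.integrable_of_hasCompactSupport hΦc
    rwa [MeasureTheory.Measure.volume_eq_prod] at h0
  have hswap : Integrable (Function.uncurry fun t x => Φ (x, t))
      ((volume.restrict (Set.Ioc t₀ t₁)).prod (volume : Measure ℝ)) := by
    have hps : (volume.restrict (Set.Ioc t₀ t₁)).prod (volume : Measure ℝ)
        = ((volume : Measure ℝ).prod (volume : Measure ℝ)).restrict
            ((Set.Ioc t₀ t₁) ×ˢ Set.univ) := by
      rw [← Measure.prod_restrict, Measure.restrict_univ]
    rw [hps]
    exact hint.swap.restrict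
  rw [intervalIntegral.integral_of_le h]
  rw [MeasureTheory.integral_integral_swap hswap]
  congr 1
  funext x
  rw [intervalIntegral.integral_of_le h]

private lemma hcs_mul_left {α : Type*} [TopologicalSpace α] {u v : α → ℝ}
    (hu : HasCompactSupport u) : HasCompactSupport (fun p => u p * v p) := by
  apply HasCompactSupport.mono' hu
  intro p hp
  apply subset_tsupport
  intro h0
  exact hp (by simp [h0])

private lemma integrable_mul_cs' {u v : ℝ → ℝ} (hu : Continuous u)
    (huc : HasCompactSupport u) (hv : Continuous v) :
    Integrable (fun x => u x * v x) := by
  have h := integrable_mul_cs hv hu huc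
  apply h.congr
  filter_upwards with x using mul_comm (v x) (u x)

end AuxStationarity


/-- Stationarity of the cost functional: if the Lagrange multiplier `λ` satisfies the
backward adjoint equation together with the final-time condition, then the cost functional
is stationary with respect to every admissible state variation `δf`. -/
theorem adjoint_equation_implies_stationarity
    (t₀ t₁ : ℝ) (ht : t₀ < t₁) (f l : ℝ × ℝ → ℝ)
    (hf : ContDiff ℝ (⊤ : ℕ∞) f) (hl : ContDiff ℝ (⊤ : ℕ∞) l) (hlsupp : HasCompactSupport l)
    (fstar : ℝ → ℝ) (hfstar : Continuous fstar)
    (hmisfit : MemLp (fun x : ℝ => fstar x - f (x, t₁)) 2 volume)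
    (S : Finset (ℕ × ℕ)) (hS : ∀ q ∈ S, 1 ≤ q.2)
    (α : {q : ℕ × ℕ // q ∈ S} → ℝ)
    (hadj : ∀ x : ℝ, ∀ t ∈ Set.Icc t₀ t₁,
      deriv (fun s => l (x, s)) t
        = ∑ q : {q : ℕ × ℕ // q ∈ S},
            (-1 : ℝ) ^ q.1.1 * α q * q.1.2 * f (x, t) ^ (q.1.2 - 1)
              * iteratedDeriv q.1.1 (fun x => l (x, t)) x)
    (hfinal : ∀ x : ℝ, l (x, t₁) = 2 * (fstar x - f (x, t₁))) :
    ∀ δf : ℝ × ℝ → ℝ, ContDiff ℝ (⊤ : ℕ∞) δf → HasCompactSupport δf →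
      (∀ x : ℝ, δf (x, t₀) = 0) →
      HasDerivAt (fun ε : ℝ =>
          (∫ x : ℝ, (fstar x - f (x, t₁) - ε * δf (x, t₁)) ^ 2)
          + ∫ t in t₀..t₁, ∫ x : ℝ,
              l (x, t) * (deriv (fun s => f (x, s) + ε * δf (x, s)) t
                + ∑ q : {q : ℕ × ℕ // q ∈ S},
                    α q * iteratedDeriv q.1.1 (fun x => (f (x, t) + ε * δf (x, t)) ^ q.1.2) x))
        0 0 := by
  classical
  intro δf hδf hδfc hδf0
  have hf' : ContDiff ℝ (⊤:ℕ∞) f := hf.of_le (by simp)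
  have hl' : ContDiff ℝ (⊤:ℕ∞) l := hl.of_le (by simp)
  have hδ' : ContDiff ℝ (⊤:ℕ∞) δf := hδf.of_le (by simp)
  set A : ℝ → ℝ := fun x => fstar x - f (x, t₁) with hAdef
  set B : ℝ → ℝ := fun x => δf (x, t₁) with hBdef
  set ft : ℝ × ℝ → ℝ := fun p => fderiv ℝ f p (0, 1) with hftdef
  set dft : ℝ × ℝ → ℝ := fun p => fderiv ℝ δf p (0, 1) with hdftdef
  set lt : ℝ × ℝ → ℝ := fun p => fderiv ℝ l p (0, 1) with hltdef
  set N : ℕ := 2 + S.sup (fun q => q.2) with hNdef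
  set g : {q : ℕ × ℕ // q ∈ S} → ℕ → ℝ × ℝ → ℝ :=
    fun q k p => (q.1.2.choose k : ℝ) * δf p ^ k * f p ^ (q.1.2 - k) with hgdef
  set G : {q : ℕ × ℕ // q ∈ S} → ℕ → ℝ × ℝ → ℝ :=
    fun q k p => iteratedDeriv q.1.1 (fun y => g q k (y, p.2)) p.1 with hGdef
  set W : ℕ → ℝ × ℝ → ℝ := fun k p =>
    l p * ((if k = 0 then ft p else if k = 1 then dft p else 0)
      + ∑ q : {q : ℕ × ℕ // q ∈ S}, α q * (if k ≤ q.1.2 then G q k p else 0)) with hWdef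
  -- basic smoothness / support facts
  have hgsmooth : ∀ q k, ContDiff ℝ (⊤:ℕ∞) (g q k) := by
    intro q k
    exact (contDiff_const.mul (hδ'.pow k)).mul (hf'.pow _)
  have hGcont : ∀ q k, Continuous (G q k) := by
    intro q k
    exact (pd_joint_smooth q.1.1 (g q k) (hgsmooth q k)).continuous
  have hWcont : ∀ k, Continuous (W k) := by
    intro k
    apply (hl'.continuous).mul
    apply Continuous.add
    · split_ifs
      · exact (fderiv_apply_smooth hf' _).continuous
      · exact (fderiv_apply_smooth hδ' _).continuous
      · exact continuous_const
    · refine continuous_finset_sum _ (fun q _ => Continuous.mul continuous_const ?_)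
      split_ifs
      · exact hGcont q k
      · exact continuous_const
  have hWcs : ∀ k, HasCompactSupport (W k) := by
    intro k
    apply HasCompactSupport.mono' hlsupp
    intro p hp
    apply subset_tsupport
    intro h0
    apply hp
    simp only [hWdef, h0, zero_mul]
  have hWslice_int : ∀ k t, Integrable (fun x => W k (x, t)) := by
    intro k t
    exact Continuous.integrable_of_hasCompactSupport
      ((hWcont k).comp (continuous_id.prodMk continuous_const))
      (hcs_slice (hWcs k) t)
  have hm_cont : ∀ k, Continuous (fun t => ∫ x, W k (x, t)) := fun k =>
    cont_param_integral (hWcont k) (hWcs k)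
  set m : ℕ → ℝ := fun k => ∫ t in t₀..t₁, ∫ x, W k (x, t) with hmdef
  -- first-integral facts
  have hAcont : Continuous A := hfstar.sub (slice_x_smooth hf' t₁).continuous
  have hBcont : Continuous B := (slice_x_smooth hδ' t₁).continuous
  have hBcs : HasCompactSupport B := hcs_slice hδfc t₁
  have hIA2 : Integrable (fun x => A x ^ 2) := hmisfit.integrable_sq
  have hIAB : Integrable (fun x => A x * B x) :=
    integrable_L2_mul_cs hAcont.aestronglyMeasurable hmisfit hBcont hBcs
  have hIB2 : Integrable (fun x => B x ^ 2) := by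
    have h := integrable_mul_cs hBcont hBcont hBcs
    apply h.congr
    filter_upwards with x using (sq (B x)) ▸ (pow_two (B x)).symm
  -- T1 expansion
  have hT1 : ∀ ε : ℝ, (∫ x : ℝ, (fstar x - f (x, t₁) - ε * δf (x, t₁)) ^ 2)
      = (∫ x, A x ^ 2) + ε * (-(2 * ∫ x, A x * B x)) + ε ^ 2 * (∫ x, B x ^ 2) := by
    intro ε
    have hpt : (fun x : ℝ => (fstar x - f (x, t₁) - ε * δf (x, t₁)) ^ 2)
        = fun x => A x ^ 2 + ε * (-(2 * (A x * B x))) + ε ^ 2 * B x ^ 2 := by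
      funext x
      simp only [hAdef, hBdef]
      ring
    rw [show (∫ x : ℝ, (fstar x - f (x, t₁) - ε * δf (x, t₁)) ^ 2)
        = ∫ x : ℝ, (A x ^ 2 + ε * (-(2 * (A x * B x))) + ε ^ 2 * B x ^ 2) from by rw [hpt]]
    have hv : Integrable (fun x => ε * (-(2 * (A x * B x)))) :=
      ((hIAB.const_mul 2).neg.const_mul ε)
    have hw : Integrable (fun x => ε ^ 2 * B x ^ 2) := hIB2.const_mul _
    have huv : Integrable (fun x => A x ^ 2 + ε * (-(2 * (A x * B x)))) volume := by
      exact hIA2.add hv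
    rw [integral_add huv hw, integral_add hIA2 hv]
    rw [integral_const_mul, integral_const_mul, integral_neg, integral_const_mul]
  -- pointwise expansion facts
  have hdt : ∀ (ε : ℝ) (x t : ℝ), deriv (fun s => f (x, s) + ε * δf (x, s)) t
      = ft (x, t) + ε * dft (x, t) := by
    intro ε x t
    exact ((hasDerivAt_slice_t hf' x t).add ((hasDerivAt_slice_t hδ' x t).const_mul ε)).deriv
  have hexp : ∀ (ε : ℝ) (q : {q : ℕ × ℕ // q ∈ S}) (x t : ℝ),
      iteratedDeriv q.1.1 (fun y => (f (y, t) + ε * δf (y, t)) ^ q.1.2) x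
        = ∑ k ∈ Finset.range (q.1.2 + 1), ε ^ k * G q k (x, t) := by
    intro ε q x t
    have hbinom : (fun y => (f (y, t) + ε * δf (y, t)) ^ q.1.2)
        = fun y => ∑ k ∈ Finset.range (q.1.2 + 1), (fun k y => ε ^ k * g q k (y, t)) k y := by
      funext y
      rw [show f (y, t) + ε * δf (y, t) = ε * δf (y, t) + f (y, t) from add_comm _ _, add_pow]
      refine Finset.sum_congr rfl fun k hk => ?_
      simp only [hgdef]
      rw [mul_pow]
      ring
    rw [hbinom]
    rw [iteratedDeriv_finset_sum (Finset.range (q.1.2 + 1))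
      (fun k _ => contDiff_const.mul (slice_x_smooth (hgsmooth q k) t)) q.1.1 x]
    refine Finset.sum_congr rfl fun k _ => ?_
    rw [iteratedDeriv_const_mul' _ (slice_x_smooth (hgsmooth q k) t)]
  have hC1 : ∀ (ε : ℝ) (x t : ℝ),
      l (x, t) * (deriv (fun s => f (x, s) + ε * δf (x, s)) t
          + ∑ q : {q : ℕ × ℕ // q ∈ S},
              α q * iteratedDeriv q.1.1 (fun y => (f (y, t) + ε * δf (y, t)) ^ q.1.2) x)
        = ∑ k ∈ Finset.range N, ε ^ k * W k (x, t) := by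
    intro ε x t
    rw [hdt ε x t]
    have hsums : ∑ q : {q : ℕ × ℕ // q ∈ S},
          α q * iteratedDeriv q.1.1 (fun y => (f (y, t) + ε * δf (y, t)) ^ q.1.2) x
        = ∑ q : {q : ℕ × ℕ // q ∈ S},
          α q * ∑ k ∈ Finset.range (q.1.2 + 1), ε ^ k * G q k (x, t) :=
      Finset.sum_congr rfl fun q _ => by rw [hexp ε q x t]
    rw [hsums]
    have hR : ∑ k ∈ Finset.range N, ε ^ k * W k (x, t)
        = l (x, t) * ∑ k ∈ Finset.range N, (ε ^ k *
            ((if k = 0 then ft (x, t) else if k = 1 then dft (x, t) else 0))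
            + ε ^ k * ∑ q : {q : ℕ × ℕ // q ∈ S},
                α q * (if k ≤ q.1.2 then G q k (x, t) else 0)) := by
      rw [Finset.mul_sum]
      refine Finset.sum_congr rfl fun k _ => ?_
      simp only [hWdef]
      ring
    rw [hR]
    congr 1
    rw [Finset.sum_add_distrib]
    have h2N : 2 ≤ N := Nat.le_add_right 2 _
    have h01 : ∑ k ∈ Finset.range N,
        ε ^ k * (if k = 0 then ft (x, t) else if k = 1 then dft (x, t) else 0)
        = ft (x, t) + ε * dft (x, t) := by
      rw [← Finset.sum_subset (Finset.range_subset_range.mpr h2N)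
        (fun k _ hk => by
          have : ¬ (k = 0) ∧ ¬ (k = 1) := by
            constructor <;> intro h <;> exact hk (Finset.mem_range.mpr (by omega))
          rw [if_neg this.1, if_neg this.2, mul_zero])]
      rw [Finset.sum_range_succ, Finset.sum_range_one]
      norm_num
    have h02 : ∑ k ∈ Finset.range N,
        ε ^ k * ∑ q : {q : ℕ × ℕ // q ∈ S}, α q * (if k ≤ q.1.2 then G q k (x, t) else 0)
        = ∑ q : {q : ℕ × ℕ // q ∈ S},
            α q * ∑ k ∈ Finset.range (q.1.2 + 1), ε ^ k * G q k (x, t) := by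
      have hstep1 : ∀ k, ε ^ k * ∑ q : {q : ℕ × ℕ // q ∈ S},
            α q * (if k ≤ q.1.2 then G q k (x, t) else 0)
          = ∑ q : {q : ℕ × ℕ // q ∈ S},
              α q * (ε ^ k * (if k ≤ q.1.2 then G q k (x, t) else 0)) := by
        intro k
        rw [Finset.mul_sum]
        exact Finset.sum_congr rfl fun q _ => by ring
      simp only [hstep1]
      rw [Finset.sum_comm]
      refine Finset.sum_congr rfl fun q _ => ?_
      rw [← Finset.mul_sum]
      congr 1
      have hqN : q.1.2 + 1 ≤ N := by
        have h : q.1.2 ≤ S.sup (fun q => q.2) := Finset.le_sup q.2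
        omega
      rw [← Finset.sum_subset (Finset.range_subset_range.mpr hqN)
        (fun k _ hk => by
          have : ¬ (k ≤ q.1.2) := by
            intro h; exact hk (Finset.mem_range.mpr (by omega))
          rw [if_neg this, mul_zero])]
      refine Finset.sum_congr rfl fun k hk => ?_
      rw [if_pos (Nat.lt_succ_iff.mp (Finset.mem_range.mp hk))]
    rw [h01, h02]
  -- T2 expansion
  have hT2 : ∀ ε : ℝ, (∫ t in t₀..t₁, ∫ x : ℝ,
        l (x, t) * (deriv (fun s => f (x, s) + ε * δf (x, s)) t
          + ∑ q : {q : ℕ × ℕ // q ∈ S},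
              α q * iteratedDeriv q.1.1 (fun x => (f (x, t) + ε * δf (x, t)) ^ q.1.2) x))
      = ∑ k ∈ Finset.range N, ε ^ k * m k := by
    intro ε
    have hinner : ∀ t : ℝ, (∫ x : ℝ,
        l (x, t) * (deriv (fun s => f (x, s) + ε * δf (x, s)) t
          + ∑ q : {q : ℕ × ℕ // q ∈ S},
              α q * iteratedDeriv q.1.1 (fun x => (f (x, t) + ε * δf (x, t)) ^ q.1.2) x))
        = ∑ k ∈ Finset.range N, ε ^ k * ∫ x, W k (x, t) := by
      intro t
      rw [show (∫ x : ℝ,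
          l (x, t) * (deriv (fun s => f (x, s) + ε * δf (x, s)) t
            + ∑ q : {q : ℕ × ℕ // q ∈ S},
                α q * iteratedDeriv q.1.1 (fun x => (f (x, t) + ε * δf (x, t)) ^ q.1.2) x))
          = ∫ x : ℝ, ∑ k ∈ Finset.range N, ε ^ k * W k (x, t) from by
        congr 1
        funext x
        exact hC1 ε x t]
      rw [integral_finset_sum _ (fun k _ => (hWslice_int k t).const_mul _)]
      exact Finset.sum_congr rfl fun k _ => integral_const_mul _ _
    rw [intervalIntegral.integral_congr (fun t _ => hinner t)]
    rw [intervalIntegral.integral_finset_sum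
      (fun k _ => (show Continuous (fun t => ε ^ k * ∫ x, W k (x, t)) from continuous_const.mul (hm_cont k)).intervalIntegrable _ _)]
    exact Finset.sum_congr rfl fun k _ => intervalIntegral.integral_const_mul _ _
  -- the key identity
  have hm1 : m 1 = 2 * ∫ x, A x * B x := by
    set Φ : ℝ × ℝ → ℝ := fun p => lt p * δf p + l p * dft p with hΦdef
    have hltcs : HasCompactSupport lt := HasCompactSupport.fderiv_apply (𝕜 := ℝ) hlsupp ((0:ℝ),(1:ℝ))
    have hdftcs : HasCompactSupport dft := HasCompactSupport.fderiv_apply (𝕜 := ℝ) hδfc ((0:ℝ),(1:ℝ))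
    have hΦcont : Continuous Φ :=
      ((fderiv_apply_smooth hl' _).continuous.mul hδ'.continuous).add
        (hl'.continuous.mul (fderiv_apply_smooth hδ' _).continuous)
    have hΦcs : HasCompactSupport Φ := (hcs_mul_left hltcs).add (hcs_mul_left hlsupp)
    have hg1cs : ∀ q : {q : ℕ × ℕ // q ∈ S}, HasCompactSupport (g q 1) := by
      intro q
      apply HasCompactSupport.mono' hδfc
      intro p hp
      apply subset_tsupport
      intro h0
      exact hp (by simp [hgdef, h0])
    have hGslice_cs : ∀ (q : {q : ℕ × ℕ // q ∈ S}) (t : ℝ),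
        HasCompactSupport (fun x => G q 1 (x, t)) := by
      intro q t
      exact hcs_iteratedDeriv (hcs_slice (hg1cs q) t) q.1.1
    have hint1 : ∀ t : ℝ, Integrable (fun x => l (x, t) * dft (x, t)) := by
      intro t
      exact integrable_mul_cs (slice_x_smooth hl' t).continuous
        ((fderiv_apply_smooth hδ' _).continuous.comp (continuous_id.prodMk continuous_const))
        (hcs_slice hdftcs t)
    have hint2 : ∀ (q : {q : ℕ × ℕ // q ∈ S}) (t : ℝ),
        Integrable (fun x => l (x, t) * G q 1 (x, t)) := by
      intro q t
      exact integrable_mul_cs (slice_x_smooth hl' t).continuous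
        ((hGcont q 1).comp (continuous_id.prodMk continuous_const)) (hGslice_cs q t)
    have hint5 : ∀ t : ℝ, Integrable (fun x => δf (x, t) * lt (x, t)) := by
      intro t
      exact integrable_mul_cs' (slice_x_smooth hδ' t).continuous (hcs_slice hδfc t)
        ((fderiv_apply_smooth hl' _).continuous.comp (continuous_id.prodMk continuous_const))
    have h8a : ∀ t ∈ Set.uIcc t₀ t₁, (∫ x, W 1 (x, t)) = ∫ x, Φ (x, t) := by
      intro t htmem
      have htIcc : t ∈ Set.Icc t₀ t₁ := by rwa [Set.uIcc_of_le ht.le] at htmem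
      have hterm : ∀ q : {q : ℕ × ℕ // q ∈ S}, (∫ x, l (x, t) * G q 1 (x, t))
          = (-1:ℝ)^q.1.1 * ∫ x, iteratedDeriv q.1.1 (fun y => l (y, t)) x * g q 1 (x, t) := by
        intro q
        have h := integral_parts q.1.1 (fun y => l (y, t)) (fun y => g q 1 (y, t))
          (slice_x_smooth hl' t) (slice_x_smooth (hgsmooth q 1) t)
          (hcs_slice hlsupp t) (hcs_slice (hg1cs q) t)
        exact h
      have hq2 : ∀ q : {q : ℕ × ℕ // q ∈ S}, α q * ∫ x, l (x, t) * G q 1 (x, t)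
          = ∫ x, δf (x, t) * ((-1:ℝ)^q.1.1 * α q * q.1.2 * f (x, t) ^ (q.1.2 - 1)
              * iteratedDeriv q.1.1 (fun y => l (y, t)) x) := by
        intro q
        rw [hterm q, ← integral_const_mul, ← integral_const_mul]
        congr 1
        funext x
        simp only [hgdef, Nat.choose_one_right, pow_one]
        ring
      have hint4 : ∀ q : {q : ℕ × ℕ // q ∈ S}, Integrable (fun x =>
          δf (x, t) * ((-1:ℝ)^q.1.1 * α q * q.1.2 * f (x, t) ^ (q.1.2 - 1)
              * iteratedDeriv q.1.1 (fun y => l (y, t)) x)) := by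
        intro q
        exact integrable_mul_cs' (slice_x_smooth hδ' t).continuous (hcs_slice hδfc t)
          ((((continuous_const.mul continuous_const).mul continuous_const).mul
            ((slice_x_smooth hf' t).continuous.pow _)).mul
              (cont_iteratedDeriv (slice_x_smooth hl' t) _))
      have hsum3 : ∑ q : {q : ℕ × ℕ // q ∈ S}, α q * ∫ x, l (x, t) * G q 1 (x, t)
          = ∫ x, δf (x, t) * lt (x, t) := by
        rw [Finset.sum_congr rfl (fun q _ => hq2 q)]
        rw [← integral_finset_sum _ (fun q _ => hint4 q)]
        congr 1
        funext x
        rw [← Finset.mul_sum, ← hadj x t htIcc]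
        congr 1
        exact (hasDerivAt_slice_t hl' x t).deriv
      have hW1 : (fun x => W 1 (x, t)) = fun x =>
          l (x, t) * dft (x, t) + ∑ q : {q : ℕ × ℕ // q ∈ S},
            α q * (l (x, t) * G q 1 (x, t)) := by
        funext x
        have h1 : (if (1:ℕ) = 0 then ft (x, t) else if (1:ℕ) = 1 then dft (x, t) else 0)
            = dft (x, t) := by norm_num
        have h2 : ∀ q : {q : ℕ × ℕ // q ∈ S},
            (if 1 ≤ q.1.2 then G q 1 (x, t) else 0) = G q 1 (x, t) :=
          fun q => if_pos (hS q.1 q.2)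
        simp only [hWdef, h1, h2]
        rw [mul_add, Finset.mul_sum]
        congr 1
        exact Finset.sum_congr rfl fun q _ => by ring
      rw [hW1]
      have hintsum : Integrable (fun x => ∑ q : {q : ℕ × ℕ // q ∈ S},
          α q * (l (x, t) * G q 1 (x, t))) :=
        integrable_finset_sum _ (fun q _ => (hint2 q t).const_mul _)
      rw [integral_add (hint1 t) hintsum]
      rw [integral_finset_sum _ (fun q _ => (hint2 q t).const_mul _)]
      rw [Finset.sum_congr rfl (fun (q : {q : ℕ × ℕ // q ∈ S}) _ =>
        integral_const_mul (α q) _)]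
      rw [hsum3]
      rw [← integral_add (hint1 t) (hint5 t)]
      congr 1
      funext x
      simp only [hΦdef]
      ring
    have h8a' : m 1 = ∫ t in t₀..t₁, ∫ x, Φ (x, t) := intervalIntegral.integral_congr h8a
    rw [h8a', swap_interval_integral hΦcont hΦcs t₀ t₁ ht.le]
    have h8d : ∀ x : ℝ, (∫ t in t₀..t₁, Φ (x, t)) = l (x, t₁) * δf (x, t₁) := by
      intro x
      have hder : ∀ t ∈ Set.uIcc t₀ t₁,
          HasDerivAt (fun s => l (x, s) * δf (x, s)) (Φ (x, t)) t := by
        intro t _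
        have h := (hasDerivAt_slice_t hl' x t).fun_mul (hasDerivAt_slice_t hδ' x t)
        simpa [hΦdef] using h
      have hi : IntervalIntegrable (fun t => Φ (x, t)) volume t₀ t₁ :=
        (hΦcont.comp (continuous_const.prodMk continuous_id)).intervalIntegrable _ _
      rw [intervalIntegral.integral_eq_sub_of_hasDerivAt hder hi, hδf0 x]
      ring
    rw [show (∫ x : ℝ, ∫ t in t₀..t₁, Φ (x, t)) = ∫ x : ℝ, 2 * (A x * B x) from by
      congr 1
      funext x
      rw [h8d x, hfinal x]
      simp only [hAdef, hBdef]
      ring]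
    rw [integral_const_mul]
  -- assembly
  have hFeq : (fun ε : ℝ =>
          (∫ x : ℝ, (fstar x - f (x, t₁) - ε * δf (x, t₁)) ^ 2)
          + ∫ t in t₀..t₁, ∫ x : ℝ,
              l (x, t) * (deriv (fun s => f (x, s) + ε * δf (x, s)) t
                + ∑ q : {q : ℕ × ℕ // q ∈ S},
                    α q * iteratedDeriv q.1.1 (fun x => (f (x, t) + ε * δf (x, t)) ^ q.1.2) x))
      = fun ε : ℝ => ((∫ x, A x ^ 2) + ε * (-(2 * ∫ x, A x * B x)) + ε ^ 2 * (∫ x, B x ^ 2))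
          + ∑ k ∈ Finset.range N, ε ^ k * m k := by
    funext ε
    rw [hT1 ε, hT2 ε]
  rw [hFeq]
  have hd1 : HasDerivAt (fun ε : ℝ =>
      (∫ x, A x ^ 2) + ε * (-(2 * ∫ x, A x * B x)) + ε ^ 2 * (∫ x, B x ^ 2))
      (-(2 * ∫ x, A x * B x)) 0 := by
    have h1 : HasDerivAt (fun ε : ℝ => ε * (-(2 * ∫ x, A x * B x)))
        (-(2 * ∫ x, A x * B x)) 0 := by
      simpa using (hasDerivAt_id (0:ℝ)).mul_const (-(2 * ∫ x, A x * B x))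
    have h2 : HasDerivAt (fun ε : ℝ => ε ^ 2 * (∫ x, B x ^ 2)) 0 0 := by
      have h := (hasDerivAt_pow 2 (0:ℝ)).mul_const (∫ x, B x ^ 2)
      simpa using h
    simpa using ((hasDerivAt_const (0:ℝ) (∫ x, A x ^ 2)).fun_add h1).fun_add h2
  have hd2 : HasDerivAt (fun ε : ℝ => ∑ k ∈ Finset.range N, ε ^ k * m k) (m 1) 0 := by
    have h : HasDerivAt (fun ε : ℝ => ∑ k ∈ Finset.range N, ε ^ k * m k)
        (∑ k ∈ Finset.range N, ((k : ℝ) * (0:ℝ) ^ (k-1)) * m k) 0 :=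
      HasDerivAt.fun_sum fun k _ => (hasDerivAt_pow k 0).mul_const (m k)
    convert h using 1
    rw [Finset.sum_eq_single 1]
    · norm_num
    · intro k hk hne
      match k, hne with
      | 0, _ => norm_num
      | (j+2), _ => simp [zero_pow]
    · intro h1
      exact absurd (Finset.mem_range.mpr (lt_of_lt_of_le one_lt_two (Nat.le_add_right 2 _))) h1
  have hsum0 : (-(2 * ∫ x, A x * B x)) + m 1 = 0 := by
    rw [hm1]; ring
  have := hd1.add hd2
  rw [hsum0] at this
  exact this
end

section
/- Let f : ℝ × ℝ → ℝ be defined by f(x,t) = sin(x − t). Then for every natural number k, every real number c, and all x, t ∈ ℝ, ∂_t f(x,t) + (k:ℝ) · ∂_x f(x,t) + ((k:ℝ) − 1) · ∂_x³ f(x,t) + c · ( ∂_x² f(x,t) + ∂_x⁴ f(x,t) ) = 0. -/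
/-!
Both derivatives of a traveling wave `g (x - t)` are derivatives of the profile `g`, namely
`∂_t = -g'` and `∂_x^n = g⁽ⁿ⁾` at `x - t`, so the family reduces to
`(k - 1) (g' + g''') + c (g'' + g'''') = 0`. Both brackets vanish as soon as `g''' = -g'`,
which holds for `g = sin`.
-/

open Real

lemma iteratedDeriv_four_eq_neg_of_iteratedDeriv_three_eq_neg {g : ℝ → ℝ}
    (hg : iteratedDeriv 3 g = -iteratedDeriv 1 g) :
    iteratedDeriv 4 g = -iteratedDeriv 2 g := by
  rw [iteratedDeriv_succ, hg, deriv.neg', iteratedDeriv_succ (n := 1)]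
  rfl

lemma iteratedDeriv_three_sin : iteratedDeriv 3 sin = -iteratedDeriv 1 sin := by
  simp

theorem travelingWave_solves_family_of_iteratedDeriv_three_eq_neg {g : ℝ → ℝ}
    (hg : iteratedDeriv 3 g = -iteratedDeriv 1 g) (k : ℕ) (c x t : ℝ) :
    deriv (fun s => g (x - s)) t
      + (k : ℝ) * iteratedDeriv 1 (fun y => g (y - t)) x
      + ((k : ℝ) - 1) * iteratedDeriv 3 (fun y => g (y - t)) x
      + c * (iteratedDeriv 2 (fun y => g (y - t)) x
          + iteratedDeriv 4 (fun y => g (y - t)) x) = 0 := by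
  simp only [deriv_comp_const_sub, iteratedDeriv_comp_sub_const,
    iteratedDeriv_four_eq_neg_of_iteratedDeriv_three_eq_neg hg, hg, iteratedDeriv_one,
    Pi.neg_apply]
  ring

/-- The traveling wave `f(x,t) = sin(x − t)` solves the infinite family of PDEs
`f_t + k f_x + (k−1) f_{xxx} + c (f_{xx} + f_{xxxx}) = 0` for every `k ∈ ℕ` and `c ∈ ℝ`. -/
theorem traveling_wave_solves_family
    (f : ℝ × ℝ → ℝ) (hf : ∀ x t : ℝ, f (x, t) = Real.sin (x - t)) :
    ∀ (k : ℕ) (c : ℝ) (x t : ℝ),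
      deriv (fun s => f (x, s)) t
        + (k : ℝ) * iteratedDeriv 1 (fun y => f (y, t)) x
        + ((k : ℝ) - 1) * iteratedDeriv 3 (fun y => f (y, t)) x
        + c * (iteratedDeriv 2 (fun y => f (y, t)) x
            + iteratedDeriv 4 (fun y => f (y, t)) x) = 0 := by
  intro k c x t
  simp only [hf]
  exact travelingWave_solves_family_of_iteratedDeriv_three_eq_neg iteratedDeriv_three_sin k c x t
end

section
/- Let t₀ < t₁ be reals and N a natural number. Let f : Fin N → (ℝ × ℝ → ℝ) be a family of smooth functions and λ : Fin N → (ℝ × ℝ → ℝ) a family of smooth compactly supported functions. Let S be a finite set of triples (i, d, p) with i ∈ Fin N, d ∈ ℕ, and p : Fin N → ℕ, let ε₀ ∈ ℝ and E ∈ ℝ. Define the cost C : (S → ℝ) → ℝ by C(α) = E + Σ_{i : Fin N} ∫_{t₀}^{t₁} ∫_ℝ λᵢ(x,t) · ( ∂_t fᵢ(x,t) + Σ_{(d,p) : (i,d,p)∈S} α(i,d,p) · ∂_x^d ( Π_{j : Fin N} f_j^{p(j)} )(x,t) ) dx dt + ε₀ · Σ_{(i,d,p)∈S} α(i,d,p)².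 Then for every (i,d,p) ∈ S and every α, the partial derivative of C with respect to the coordinate α(i,d,p) exists and equals (−1)^d ∫_{t₀}^{t₁} ∫_ℝ ( Π_{j : Fin N} f_j(x,t)^{p(j)} ) · ∂_x^d λᵢ(x,t) dx dt + 2 ε₀ α(i,d,p). -/
open MeasureTheory Function
open scoped ContDiff

private lemma sliceCS {F : ℝ × ℝ → ℝ} (hF : HasCompactSupport F) (t : ℝ) :
    HasCompactSupport (fun x => F (x, t)) := by
  apply HasCompactSupport.intro (hF.image continuous_fst)
  intro x hx
  by_contra h0
  exact hx ⟨(x, t), subset_tsupport _ h0, rfl⟩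

private lemma sliceCD {F : ℝ × ℝ → ℝ} (hF : ContDiff ℝ (⊤ : ℕ∞) F) (t : ℝ) :
    ContDiff ℝ (⊤ : ℕ∞) (fun x => F (x, t)) :=
  hF.comp (contDiff_id.prodMk contDiff_const)

private lemma hasDerivAt_sliceX {F : ℝ × ℝ → ℝ} (hF : ContDiff ℝ (⊤ : ℕ∞) F) (x t : ℝ) :
    HasDerivAt (fun x' => F (x', t)) (fderiv ℝ F (x, t) (1, 0)) x :=
  (((hF.differentiable (by simp)) (x, t)).hasFDerivAt).comp_hasDerivAt x
    ((hasDerivAt_id x).prodMk (hasDerivAt_const x t))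

private lemma hasDerivAt_sliceT {F : ℝ × ℝ → ℝ} (hF : ContDiff ℝ (⊤ : ℕ∞) F) (x t : ℝ) :
    HasDerivAt (fun s => F (x, s)) (fderiv ℝ F (x, t) (0, 1)) t :=
  (((hF.differentiable (by simp)) (x, t)).hasFDerivAt).comp_hasDerivAt t
    ((hasDerivAt_const t x).prodMk (hasDerivAt_id t))

private lemma contDiff_pderivX {F : ℝ × ℝ → ℝ} (hF : ContDiff ℝ (⊤ : ℕ∞) F) :
    ContDiff ℝ (⊤ : ℕ∞) (fun w : ℝ × ℝ => deriv (fun x' => F (x', w.2)) w.1) := by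
  have h : (fun w : ℝ × ℝ => deriv (fun x' => F (x', w.2)) w.1)
      = fun w => fderiv ℝ F w (1, 0) := by
    funext w
    exact (hasDerivAt_sliceX hF w.1 w.2).deriv
  rw [h]
  exact (hF.fderiv_right (by simp)).clm_apply contDiff_const

private lemma contDiff_iterPderivX {F : ℝ × ℝ → ℝ} (hF : ContDiff ℝ (⊤ : ℕ∞) F) :
    ∀ d : ℕ, ContDiff ℝ (⊤ : ℕ∞) (fun w : ℝ × ℝ => iteratedDeriv d (fun x' => F (x', w.2)) w.1)
  | 0 => by simpa [iteratedDeriv_zero] using hF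
  | (d + 1) => by
    have h2 := contDiff_pderivX (contDiff_iterPderivX hF d)
    simp only [iteratedDeriv_succ]
    exact h2

private lemma continuous_pderivT {F : ℝ × ℝ → ℝ} (hF : ContDiff ℝ (⊤ : ℕ∞) F) :
    Continuous (fun w : ℝ × ℝ => deriv (fun s => F (w.1, s)) w.2) := by
  have h : (fun w : ℝ × ℝ => deriv (fun s => F (w.1, s)) w.2)
      = fun w => fderiv ℝ F w (0, 1) := by
    funext w
    exact (hasDerivAt_sliceT hF w.1 w.2).deriv
  rw [h]
  exact (((hF.fderiv_right (by simp)).clm_apply contDiff_const : ContDiff ℝ (⊤ : ℕ∞) _)).continuous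

private lemma ibp_iter : ∀ (d : ℕ) (u v : ℝ → ℝ), ContDiff ℝ ∞ u → ContDiff ℝ ∞ v →
    HasCompactSupport u →
    ∫ x : ℝ, u x * iteratedDeriv d v x = (-1 : ℝ) ^ d * ∫ x : ℝ, iteratedDeriv d u x * v x
  | 0, u, v, _, _, _ => by simp [iteratedDeriv_zero]
  | (d + 1), u, v, hu, hv, hus => by
    have hu' : ContDiff ℝ ∞ (deriv u) := (contDiff_infty_iff_deriv.mp hu).2
    have hvd : ContDiff ℝ ∞ (iteratedDeriv d v) := by
      rw [iteratedDeriv_eq_iterate]; exact ContDiff.iterate_deriv d hv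
    have hvd' : ContDiff ℝ ∞ (deriv (iteratedDeriv d v)) := (contDiff_infty_iff_deriv.mp hvd).2
    have h1 : ∫ x : ℝ, u x * deriv (iteratedDeriv d v) x
        = - ∫ x : ℝ, deriv u x * iteratedDeriv d v x := by
      refine integral_mul_deriv_eq_deriv_mul_of_integrable
        (fun x _ => (hu.differentiable (by norm_num) x).hasDerivAt)
        (fun x _ => (hvd.differentiable (by norm_num) x).hasDerivAt) ?_ ?_ ?_
      · exact (hu.continuous.mul hvd'.continuous).integrable_of_hasCompactSupport hus.mul_right
      · exact (hu'.continuous.mul hvd.continuous).integrable_of_hasCompactSupport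
          hus.deriv.mul_right
      · exact (hu.continuous.mul hvd.continuous).integrable_of_hasCompactSupport hus.mul_right
    have ih := ibp_iter d (deriv u) v hu' hv hus.deriv
    rw [iteratedDeriv_succ, h1, ih, iteratedDeriv_succ']
    ring

private lemma cont_param {F : ℝ × ℝ → ℝ} (hF : Continuous F)
    {K : Set ℝ} (hK : IsCompact K) (h0 : ∀ x t, x ∉ K → F (x, t) = 0) :
    Continuous (fun t => ∫ x : ℝ, F (x, t)) := by
  have heq : (fun t => ∫ x : ℝ, F (x, t)) = fun t => ∫ x in K, F (x, t) := by
    funext t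
    exact (setIntegral_eq_integral_of_forall_compl_eq_zero (fun x hx => h0 x t hx)).symm
  rw [heq]
  exact continuous_parametric_integral_of_continuous
    (f := fun t x => F (x, t)) (by fun_prop) hK

private lemma key_ibp (t₀ t₁ : ℝ) {lF G : ℝ × ℝ → ℝ} (hlF : ContDiff ℝ (⊤ : ℕ∞) lF)
    (hls : HasCompactSupport lF) (hG : ContDiff ℝ (⊤ : ℕ∞) G) (d : ℕ) :
    (∫ t in t₀..t₁, ∫ x : ℝ, lF (x, t) * iteratedDeriv d (fun x => G (x, t)) x)
      = (-1 : ℝ) ^ d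
        * ∫ t in t₀..t₁, ∫ x : ℝ, G (x, t) * iteratedDeriv d (fun x => lF (x, t)) x := by
  rw [← intervalIntegral.integral_const_mul]
  refine intervalIntegral.integral_congr fun t _ => ?_
  rw [ibp_iter d (fun x => lF (x, t)) (fun x => G (x, t)) ((sliceCD hlF t).of_le (by simp))
    ((sliceCD hG t).of_le (by simp)) (sliceCS hls t)]
  congr 1
  exact integral_congr_ae (Filter.Eventually.of_forall fun x => mul_comm _ _)

private lemma sum_update_point {β : Type*} [Fintype β] [DecidableEq β]
    (h : β → ℝ → ℝ) (α : β → ℝ) (q₀ : β) (s : ℝ) :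
    ∑ q, h q (Function.update α q₀ s q)
      = (∑ q, h q (α q)) + (h q₀ s - h q₀ (α q₀)) := by
  have key : ∀ q, h q (Function.update α q₀ s q)
      = h q (α q) + (if q = q₀ then h q₀ s - h q₀ (α q₀) else 0) := by
    intro q
    by_cases hq : q = q₀
    · subst hq; simp
    · simp [Function.update_of_ne hq, hq]
  simp [key, Finset.sum_add_distrib, Finset.sum_ite_eq']

/-- Adjoint-method gradient formula for a system of `N` parameterized PDEs in one spatial
dimension: the partial derivative of the cost `C` with respect to the coefficient
`α(i,d,p)` equals `(−1)^d ∫∫ (Π_j f_j^{p j}) · ∂_x^d λᵢ + 2 ε₀ α(i,d,p)`. -/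
theorem adjoint_gradient_formula_system
    (t₀ t₁ : ℝ) (ht : t₀ < t₁) (N : ℕ)
    (f : Fin N → (ℝ × ℝ → ℝ)) (l : Fin N → (ℝ × ℝ → ℝ))
    (hf : ∀ i, ContDiff ℝ (⊤ : ℕ∞) (f i)) (hl : ∀ i, ContDiff ℝ (⊤ : ℕ∞) (l i))
    (hlsupp : ∀ i, HasCompactSupport (l i))
    (S : Finset (Fin N × ℕ × (Fin N → ℕ))) (ε₀ E : ℝ)
    (C : ({q : Fin N × ℕ × (Fin N → ℕ) // q ∈ S} → ℝ) → ℝ)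
    (hC : ∀ α : {q : Fin N × ℕ × (Fin N → ℕ) // q ∈ S} → ℝ,
      C α = E
        + (∑ i : Fin N, ∫ t in t₀..t₁, ∫ x : ℝ,
            l i (x, t) * (deriv (fun s => f i (x, s)) t
              + ∑ q : {q : Fin N × ℕ × (Fin N → ℕ) // q ∈ S},
                  if q.1.1 = i then
                    α q * iteratedDeriv q.1.2.1
                      (fun x => ∏ j : Fin N, f j (x, t) ^ q.1.2.2 j) x
                  else 0))
        + ε₀ * ∑ q : {q : Fin N × ℕ × (Fin N → ℕ) // q ∈ S}, (α q) ^ 2)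
    (i : Fin N) (d : ℕ) (p : Fin N → ℕ) (hidp : (i, d, p) ∈ S)
    (α : {q : Fin N × ℕ × (Fin N → ℕ) // q ∈ S} → ℝ) :
    HasDerivAt (fun s : ℝ => C (Function.update α ⟨(i, d, p), hidp⟩ s))
      ((-1 : ℝ) ^ d * (∫ t in t₀..t₁, ∫ x : ℝ,
          (∏ j : Fin N, f j (x, t) ^ p j) * iteratedDeriv d (fun x => l i (x, t)) x)
        + 2 * ε₀ * α ⟨(i, d, p), hidp⟩)
      (α ⟨(i, d, p), hidp⟩) := by
  classical
  set q₀ : {q : Fin N × ℕ × (Fin N → ℕ) // q ∈ S} := ⟨(i, d, p), hidp⟩ with hq₀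
  set s₀ : ℝ := α q₀ with hs₀
  -- smoothness of monomials
  have hGq : ∀ q : {q : Fin N × ℕ × (Fin N → ℕ) // q ∈ S},
      ContDiff ℝ (⊤ : ℕ∞) (fun w : ℝ × ℝ => ∏ j : Fin N, f j w ^ q.1.2.2 j) :=
    fun q => contDiff_prod fun j _ => (hf j).pow _
  have hG : ContDiff ℝ (⊤ : ℕ∞) (fun w : ℝ × ℝ => ∏ j : Fin N, f j w ^ p j) :=
    contDiff_prod fun j _ => (hf j).pow _
  -- joint continuity of the iterated x-derivatives of the monomials
  have hDq : ∀ q : {q : Fin N × ℕ × (Fin N → ℕ) // q ∈ S}, Continuous (fun w : ℝ × ℝ =>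
      iteratedDeriv q.1.2.1 (fun x => ∏ j : Fin N, f j (x, w.2) ^ q.1.2.2 j) w.1) :=
    fun q => (contDiff_iterPderivX (hGq q) q.1.2.1).continuous
  have hD0 : Continuous (fun w : ℝ × ℝ =>
      iteratedDeriv d (fun x => ∏ j : Fin N, f j (x, w.2) ^ p j) w.1) :=
    (contDiff_iterPderivX hG d).continuous
  -- joint continuity of the "base" integrand factors
  have hbaseC : ∀ i' : Fin N, Continuous (fun w : ℝ × ℝ =>
      deriv (fun s => f i' (w.1, s)) w.2
        + ∑ q : {q : Fin N × ℕ × (Fin N → ℕ) // q ∈ S},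
            if q.1.1 = i' then
              α q * iteratedDeriv q.1.2.1
                (fun x => ∏ j : Fin N, f j (x, w.2) ^ q.1.2.2 j) w.1
            else 0) := by
    intro i'
    refine (continuous_pderivT (hf i')).add ?_
    refine continuous_finset_sum _ fun q _ => ?_
    by_cases hq : q.1.1 = i'
    · simp only [if_pos hq]; exact continuous_const.mul (hDq q)
    · simpa [hq] using (continuous_const : Continuous fun _ : ℝ × ℝ => (0 : ℝ))
  -- compact support in x, uniformly in t
  have hKc : ∀ i' : Fin N, IsCompact (Prod.fst '' tsupport (l i')) :=
    fun i' => (hlsupp i').image continuous_fst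
  have hKz : ∀ (i' : Fin N) (x t : ℝ), x ∉ Prod.fst '' tsupport (l i') → l i' (x, t) = 0 := by
    intro i' x t hx
    by_contra h0
    exact hx ⟨(x, t), subset_tsupport _ h0, rfl⟩
  -- integrability in x of the base integrand
  have hIntA : ∀ (i' : Fin N) (t : ℝ), Integrable (fun x : ℝ =>
      l i' (x, t) * (deriv (fun s => f i' (x, s)) t
        + ∑ q : {q : Fin N × ℕ × (Fin N → ℕ) // q ∈ S},
            if q.1.1 = i' then
              α q * iteratedDeriv q.1.2.1
                (fun x => ∏ j : Fin N, f j (x, t) ^ q.1.2.2 j) x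
            else 0)) := by
    intro i' t
    exact (((hl i').continuous.mul (hbaseC i')).comp
      (continuous_id.prodMk continuous_const)).integrable_of_hasCompactSupport
      ((sliceCS (hlsupp i') t).mul_right)
  -- integrability in x of the D₀ integrand
  have hIntB : ∀ (i' : Fin N) (t : ℝ), Integrable (fun x : ℝ =>
      l i' (x, t) * iteratedDeriv d (fun x => ∏ j : Fin N, f j (x, t) ^ p j) x) := by
    intro i' t
    exact (((hl i').continuous.mul hD0).comp
      (continuous_id.prodMk continuous_const)).integrable_of_hasCompactSupport
      ((sliceCS (hlsupp i') t).mul_right)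
  -- continuity in t of the parametric integrals
  have hAc : ∀ i' : Fin N, Continuous (fun t : ℝ => ∫ x : ℝ,
      l i' (x, t) * (deriv (fun s => f i' (x, s)) t
        + ∑ q : {q : Fin N × ℕ × (Fin N → ℕ) // q ∈ S},
            if q.1.1 = i' then
              α q * iteratedDeriv q.1.2.1
                (fun x => ∏ j : Fin N, f j (x, t) ^ q.1.2.2 j) x
            else 0)) := by
    intro i'
    exact cont_param ((hl i').continuous.mul (hbaseC i')) (hKc i')
      (fun x t hx => by rw [Pi.mul_apply, hKz i' x t hx, zero_mul])
  have hBc : ∀ i' : Fin N, Continuous (fun t : ℝ => ∫ x : ℝ,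
      l i' (x, t) * iteratedDeriv d (fun x => ∏ j : Fin N, f j (x, t) ^ p j) x) := by
    intro i'
    exact cont_param ((hl i').continuous.mul hD0) (hKc i')
      (fun x t hx => by rw [Pi.mul_apply, hKz i' x t hx, zero_mul])
  -- the pointwise description of the cost along the coordinate line
  have hφ : ∀ s : ℝ, C (Function.update α q₀ s)
      = (E + (∑ i' : Fin N, ∫ t in t₀..t₁, ∫ x : ℝ,
            l i' (x, t) * (deriv (fun s => f i' (x, s)) t
              + ∑ q : {q : Fin N × ℕ × (Fin N → ℕ) // q ∈ S},
                  if q.1.1 = i' then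
                    α q * iteratedDeriv q.1.2.1
                      (fun x => ∏ j : Fin N, f j (x, t) ^ q.1.2.2 j) x
                  else 0))
          + ε₀ * ((∑ q : {q : Fin N × ℕ × (Fin N → ℕ) // q ∈ S}, (α q) ^ 2) - s₀ ^ 2))
        + (s - s₀) * (∫ t in t₀..t₁, ∫ x : ℝ,
            l i (x, t) * iteratedDeriv d (fun x => ∏ j : Fin N, f j (x, t) ^ p j) x)
        + ε₀ * s ^ 2 := by
    intro s
    rw [hC]
    -- quadratic part
    have hsq : (∑ q : {q : Fin N × ℕ × (Fin N → ℕ) // q ∈ S}, (Function.update α q₀ s q) ^ 2)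
        = (∑ q : {q : Fin N × ℕ × (Fin N → ℕ) // q ∈ S}, (α q) ^ 2) + (s ^ 2 - s₀ ^ 2) := by
      simpa using sum_update_point (fun _ y => y ^ 2) α q₀ s
    -- linear part, inner sum rewriting
    have h1 : ∀ (i' : Fin N) (t x : ℝ),
        (∑ q : {q : Fin N × ℕ × (Fin N → ℕ) // q ∈ S},
            if q.1.1 = i' then
              Function.update α q₀ s q * iteratedDeriv q.1.2.1
                (fun x => ∏ j : Fin N, f j (x, t) ^ q.1.2.2 j) x
            else 0)
          = (∑ q : {q : Fin N × ℕ × (Fin N → ℕ) // q ∈ S},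
              if q.1.1 = i' then
                α q * iteratedDeriv q.1.2.1
                  (fun x => ∏ j : Fin N, f j (x, t) ^ q.1.2.2 j) x
              else 0)
            + (if i = i' then s - s₀ else 0)
              * iteratedDeriv d (fun x => ∏ j : Fin N, f j (x, t) ^ p j) x := by
      intro i' t x
      have hsplit : ∀ q : {q : Fin N × ℕ × (Fin N → ℕ) // q ∈ S},
          (if q.1.1 = i' then
              Function.update α q₀ s q * iteratedDeriv q.1.2.1
                (fun x => ∏ j : Fin N, f j (x, t) ^ q.1.2.2 j) x
            else 0)
          = (if q.1.1 = i' then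
              α q * iteratedDeriv q.1.2.1
                (fun x => ∏ j : Fin N, f j (x, t) ^ q.1.2.2 j) x
            else 0)
            + (if q = q₀ then (if i = i' then s - s₀ else 0)
                * iteratedDeriv d (fun x => ∏ j : Fin N, f j (x, t) ^ p j) x else 0) := by
        intro q
        by_cases hq : q = q₀
        · subst hq
          by_cases hii : i = i'
          · subst hii
            simp only [hq₀, hs₀, Function.update_self]
            simp only [↓reduceIte]
            ring
          · simp [hq₀, hii]
        · simp [Function.update_of_ne hq, hq]
      rw [Finset.sum_congr rfl (fun q _ => hsplit q)]
      rw [Finset.sum_add_distrib]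
      simp [Finset.sum_ite_eq']
    -- per-t splitting of the x-integral
    have h2 : ∀ (i' : Fin N) (t : ℝ),
        (∫ x : ℝ, l i' (x, t) * (deriv (fun s => f i' (x, s)) t
            + ∑ q : {q : Fin N × ℕ × (Fin N → ℕ) // q ∈ S},
                if q.1.1 = i' then
                  Function.update α q₀ s q * iteratedDeriv q.1.2.1
                    (fun x => ∏ j : Fin N, f j (x, t) ^ q.1.2.2 j) x
                else 0))
          = (∫ x : ℝ, l i' (x, t) * (deriv (fun s => f i' (x, s)) t
              + ∑ q : {q : Fin N × ℕ × (Fin N → ℕ) // q ∈ S},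
                  if q.1.1 = i' then
                    α q * iteratedDeriv q.1.2.1
                      (fun x => ∏ j : Fin N, f j (x, t) ^ q.1.2.2 j) x
                  else 0))
            + (if i = i' then s - s₀ else 0)
              * ∫ x : ℝ, l i' (x, t)
                  * iteratedDeriv d (fun x => ∏ j : Fin N, f j (x, t) ^ p j) x := by
      intro i' t
      have hfx : (fun x : ℝ => l i' (x, t) * (deriv (fun s => f i' (x, s)) t
            + ∑ q : {q : Fin N × ℕ × (Fin N → ℕ) // q ∈ S},
                if q.1.1 = i' then
                  Function.update α q₀ s q * iteratedDeriv q.1.2.1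
                    (fun x => ∏ j : Fin N, f j (x, t) ^ q.1.2.2 j) x
                else 0))
          = fun x : ℝ => (l i' (x, t) * (deriv (fun s => f i' (x, s)) t
              + ∑ q : {q : Fin N × ℕ × (Fin N → ℕ) // q ∈ S},
                  if q.1.1 = i' then
                    α q * iteratedDeriv q.1.2.1
                      (fun x => ∏ j : Fin N, f j (x, t) ^ q.1.2.2 j) x
                  else 0))
            + (if i = i' then s - s₀ else 0)
              * (l i' (x, t) * iteratedDeriv d (fun x => ∏ j : Fin N, f j (x, t) ^ p j) x) := by
        funext x
        rw [h1 i' t x]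
        ring
      rw [hfx, integral_add (hIntA i' t) ((hIntB i' t).const_mul _), MeasureTheory.integral_const_mul]
    -- split the t-integral
    have h3 : ∀ i' : Fin N,
        (∫ t in t₀..t₁, ∫ x : ℝ, l i' (x, t) * (deriv (fun s => f i' (x, s)) t
            + ∑ q : {q : Fin N × ℕ × (Fin N → ℕ) // q ∈ S},
                if q.1.1 = i' then
                  Function.update α q₀ s q * iteratedDeriv q.1.2.1
                    (fun x => ∏ j : Fin N, f j (x, t) ^ q.1.2.2 j) x
                else 0))
          = (∫ t in t₀..t₁, ∫ x : ℝ, l i' (x, t) * (deriv (fun s => f i' (x, s)) t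
              + ∑ q : {q : Fin N × ℕ × (Fin N → ℕ) // q ∈ S},
                  if q.1.1 = i' then
                    α q * iteratedDeriv q.1.2.1
                      (fun x => ∏ j : Fin N, f j (x, t) ^ q.1.2.2 j) x
                  else 0))
            + (if i = i' then s - s₀ else 0)
              * ∫ t in t₀..t₁, ∫ x : ℝ,
                  l i' (x, t) * iteratedDeriv d (fun x => ∏ j : Fin N, f j (x, t) ^ p j) x := by
      intro i'
      rw [intervalIntegral.integral_congr (g := fun t =>
        (∫ x : ℝ, l i' (x, t) * (deriv (fun s => f i' (x, s)) t
            + ∑ q : {q : Fin N × ℕ × (Fin N → ℕ) // q ∈ S},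
                if q.1.1 = i' then
                  α q * iteratedDeriv q.1.2.1
                    (fun x => ∏ j : Fin N, f j (x, t) ^ q.1.2.2 j) x
                else 0))
          + (if i = i' then s - s₀ else 0)
            * ∫ x : ℝ, l i' (x, t)
                * iteratedDeriv d (fun x => ∏ j : Fin N, f j (x, t) ^ p j) x)
        (fun t _ => h2 i' t)]
      rw [intervalIntegral.integral_add ((hAc i').intervalIntegrable _ _)
        (((hBc i').intervalIntegrable _ _).const_mul _), intervalIntegral.integral_const_mul]
    -- assemble
    rw [hsq]
    rw [Finset.sum_congr rfl (fun i' _ => h3 i')]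
    rw [Finset.sum_add_distrib]
    have h4 : (∑ i' : Fin N, (if i = i' then s - s₀ else 0)
        * ∫ t in t₀..t₁, ∫ x : ℝ,
            l i' (x, t) * iteratedDeriv d (fun x => ∏ j : Fin N, f j (x, t) ^ p j) x)
        = (s - s₀) * ∫ t in t₀..t₁, ∫ x : ℝ,
            l i (x, t) * iteratedDeriv d (fun x => ∏ j : Fin N, f j (x, t) ^ p j) x := by
      rw [Finset.sum_eq_single i]
      · simp
      · intro b _ hb
        simp [Ne.symm hb]
      · intro h; exact absurd (Finset.mem_univ i) h
    rw [h4]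
    ring
  -- rewrite the function and differentiate
  have hfun : (fun s : ℝ => C (Function.update α q₀ s))
      = fun s : ℝ => (E + (∑ i' : Fin N, ∫ t in t₀..t₁, ∫ x : ℝ,
            l i' (x, t) * (deriv (fun s => f i' (x, s)) t
              + ∑ q : {q : Fin N × ℕ × (Fin N → ℕ) // q ∈ S},
                  if q.1.1 = i' then
                    α q * iteratedDeriv q.1.2.1
                      (fun x => ∏ j : Fin N, f j (x, t) ^ q.1.2.2 j) x
                  else 0))
          + ε₀ * ((∑ q : {q : Fin N × ℕ × (Fin N → ℕ) // q ∈ S}, (α q) ^ 2) - s₀ ^ 2))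
        + (s - s₀) * (∫ t in t₀..t₁, ∫ x : ℝ,
            l i (x, t) * iteratedDeriv d (fun x => ∏ j : Fin N, f j (x, t) ^ p j) x)
        + ε₀ * s ^ 2 := funext hφ
  rw [hfun]
  have hJb : (∫ t in t₀..t₁, ∫ x : ℝ,
      l i (x, t) * iteratedDeriv d (fun x => ∏ j : Fin N, f j (x, t) ^ p j) x)
      = (-1 : ℝ) ^ d * ∫ t in t₀..t₁, ∫ x : ℝ,
          (∏ j : Fin N, f j (x, t) ^ p j) * iteratedDeriv d (fun x => l i (x, t)) x :=
    key_ibp t₀ t₁ (hl i) (hlsupp i) hG d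
  have hD : HasDerivAt (fun s : ℝ =>
      (E + (∑ i' : Fin N, ∫ t in t₀..t₁, ∫ x : ℝ,
            l i' (x, t) * (deriv (fun s => f i' (x, s)) t
              + ∑ q : {q : Fin N × ℕ × (Fin N → ℕ) // q ∈ S},
                  if q.1.1 = i' then
                    α q * iteratedDeriv q.1.2.1
                      (fun x => ∏ j : Fin N, f j (x, t) ^ q.1.2.2 j) x
                  else 0))
          + ε₀ * ((∑ q : {q : Fin N × ℕ × (Fin N → ℕ) // q ∈ S}, (α q) ^ 2) - s₀ ^ 2))
        + (s - s₀) * (∫ t in t₀..t₁, ∫ x : ℝ,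
            l i (x, t) * iteratedDeriv d (fun x => ∏ j : Fin N, f j (x, t) ^ p j) x)
        + ε₀ * s ^ 2)
      (1 * (∫ t in t₀..t₁, ∫ x : ℝ,
            l i (x, t) * iteratedDeriv d (fun x => ∏ j : Fin N, f j (x, t) ^ p j) x)
        + ε₀ * ((2 : ℕ) * s₀ ^ 1)) s₀ := by
    exact ((((hasDerivAt_id s₀).sub_const s₀).mul_const _).const_add _).add
      ((hasDerivAt_pow 2 s₀).const_mul ε₀)
  convert hD using 1
  rw [hJb]
  push_cast
  ring
end
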